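/- arXiv:2104.07317 — 5 statements merged into one kernel-verified Lean document; each statement's English description precedes it below -/
import Mathlib

section
/- For all integers n, k ≥ 1 and every distribution P = (p_1, p_2, …) ∈ D_k, under Poisson sampling (N_i independent with N_i ~ Poisson(n·p_i)) the plug-in estimator Ŝ_plug = Σ_i 1{N_i > 0} satisfies E(S(P) − Ŝ_plug)² ≤ k²·e^{−2n/k} + k·e^{−n/k}. -/
open MeasureTheory ProbabilityTheory Real ENNReal

/-- `P` is a probability distribution on `ℕ`. -/
def IsDist (P : ℕ → ℝ) : Prop := (∀ i, 0 ≤ P i) ∧ HasSum P 1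

/-- `P` belongs to `D_k`: all nonzero masses are at least `1/k`. -/
def MemDk (k : ℕ) (P : ℕ → ℝ) : Prop :=
  IsDist P ∧ ∀ i, P i ≠ 0 → 1 / (k : ℝ) ≤ P i

/-- Support size `S(P)`. -/
noncomputable def suppSize (P : ℕ → ℝ) : ℕ := Set.ncard {i | P i ≠ 0}

/-! Every support point has mass at least `1/k`, so the support `T` is finite with `|T| ≤ k`, and
almost surely `N i = 0` off `T`. Hence `S(P) - Ŝ_plug` counts the unseen support points,
`∑_{i ∈ T} 1{N i = 0}`. Its second moment is `∑_{i,j ∈ T} P(N i = 0, N j = 0)`: a diagonal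
term is `e^{-n p_i} ≤ e^{-n/k}`, and an off-diagonal one factors by independence into at most
`e^{-2n/k}`. -/

open Finset

lemma Summable.finite_support_of_forall_le {ι : Type*} {f : ι → ℝ} (hf : Summable f) {c : ℝ}
    (hc : 0 < c) (hfc : ∀ i, f i ≠ 0 → c ≤ f i) : (Function.support f).Finite :=
  (Filter.eventually_cofinite.mp
    (hf.tendsto_cofinite_zero.eventually (eventually_lt_nhds hc))).subset
      fun i hi => not_lt.mpr (hfc i hi)

lemma MemDk.exists_finset_support {k : ℕ} {P : ℕ → ℝ} (hP : MemDk k P) (hk : 0 < k) :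
    ∃ T : Finset ℕ, (∀ i, i ∈ T ↔ P i ≠ 0) ∧ suppSize P = #T ∧ #T ≤ k := by
  obtain ⟨⟨-, hsum⟩, hbig⟩ := hP
  have hfin := hsum.summable.finite_support_of_forall_le (by positivity) hbig
  refine ⟨hfin.toFinset, fun i => hfin.mem_toFinset, Set.ncard_eq_toFinset_card _ hfin, ?_⟩
  have hsumT : ∑ i ∈ hfin.toFinset, P i = 1 :=
    (hasSum_sum_of_ne_finset_zero fun i hi => by simpa using hi).unique hsum
  have hle := card_nsmul_le_sum _ _ _ fun i hi => hbig i (hfin.mem_toFinset.mp hi)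
  rw [hsumT, nsmul_eq_mul, mul_one_div, div_le_one (by positivity)] at hle
  exact_mod_cast hle

lemma card_sub_tsum_ite_pos (T : Finset ℕ) (m : ℕ → ℕ) (hm : ∀ i ∉ T, m i = 0) :
    (#T : ℝ) - ∑' i, (if 0 < m i then (1 : ℝ) else 0) =
      ∑ i ∈ T, if m i = 0 then (1 : ℝ) else 0 := by
  rw [tsum_eq_sum fun i hi => by simp [hm i hi], card_eq_sum_ones, Nat.cast_sum,
    ← sum_sub_distrib]
  refine sum_congr rfl fun i _ => ?_
  by_cases h : m i = 0 <;> simp [h, Nat.pos_of_ne_zero]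

section Poisson

variable {Ω : Type*} [MeasurableSpace Ω] {μ : Measure Ω} {X : Ω → ℕ}

lemma measure_preimage_zero_of_map_eq_poissonMeasure (hX : Measurable X) {r : NNReal}
    (hlaw : μ.map X = poissonMeasure r) : μ (X ⁻¹' {0}) = ENNReal.ofReal (exp (-r)) := by
  rw [← Measure.map_apply hX (measurableSet_singleton 0), hlaw, poissonMeasure_singleton]
  simp

lemma measure_preimage_zero_le_of_map_eq_poissonMeasure (hX : Measurable X) {r c : ℝ}
    (hlaw : μ.map X = poissonMeasure r.toNNReal) (hcr : c ≤ r) :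
    μ (X ⁻¹' {0}) ≤ ENNReal.ofReal (exp (-c)) := by
  rw [measure_preimage_zero_of_map_eq_poissonMeasure hX hlaw]
  exact ENNReal.ofReal_le_ofReal (exp_le_exp.mpr (neg_le_neg (hcr.trans r.le_coe_toNNReal)))

lemma ae_eq_zero_of_map_eq_poissonMeasure_zero [IsProbabilityMeasure μ] (hX : Measurable X)
    (hlaw : μ.map X = poissonMeasure 0) : ∀ᵐ ω ∂μ, X ω = 0 := by
  have h : μ (X ⁻¹' {0}) = 1 := by simp [measure_preimage_zero_of_map_eq_poissonMeasure hX hlaw]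
  exact mem_ae_iff.mpr ((prob_compl_eq_zero_iff (hX (measurableSet_singleton 0))).mpr h)

end Poisson

lemma lintegral_sq_sum_indicator_le {Ω ι : Type*} [MeasurableSpace Ω] {μ : Measure Ω}
    (T : Finset ι) {A : ι → Set Ω} (hA : ∀ i, MeasurableSet (A i))
    (hindep : ∀ i ∈ T, ∀ j ∈ T, i ≠ j → μ (A i ∩ A j) = μ (A i) * μ (A j))
    {a : ℝ≥0∞} (ha : ∀ i ∈ T, μ (A i) ≤ a) :
    ∫⁻ ω, (∑ i ∈ T, (A i).indicator (1 : Ω → ℝ≥0∞) ω) ^ 2 ∂μ ≤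
      #T * a + #T ^ 2 * a ^ 2 := by
  classical
  have hpair : ∀ i ∈ T, ∀ j ∈ T, μ (A i ∩ A j) ≤ (if i = j then a else 0) + a ^ 2 := by
    intro i hi j hj
    rcases eq_or_ne i j with rfl | hij
    · simpa using (ha i hi).trans le_self_add
    · rw [hindep i hi j hj hij, if_neg hij, zero_add, sq]
      exact mul_le_mul' (ha i hi) (ha j hj)
  calc ∫⁻ ω, (∑ i ∈ T, (A i).indicator (1 : Ω → ℝ≥0∞) ω) ^ 2 ∂μ
      = ∑ i ∈ T, ∑ j ∈ T, μ (A i ∩ A j) := by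
        have hinter : ∀ i j ω,
            (A i).indicator (1 : Ω → ℝ≥0∞) ω * (A j).indicator 1 ω = (A i ∩ A j).indicator 1 ω :=
          fun i j ω => by rw [Set.inter_indicator_one]; rfl
        simp_rw [sq, sum_mul_sum, hinter]
        rw [lintegral_finsetSum _ fun i _ => Finset.measurable_sum _ fun j _ =>
          measurable_one.indicator ((hA i).inter (hA j))]
        refine sum_congr rfl fun i _ => ?_
        rw [lintegral_finsetSum _ fun j _ => measurable_one.indicator ((hA i).inter (hA j))]
        exact sum_congr rfl fun j _ => lintegral_indicator_one ((hA i).inter (hA j))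
    _ ≤ ∑ i ∈ T, ∑ j ∈ T, ((if i = j then a else 0) + a ^ 2) :=
        sum_le_sum fun i hi => sum_le_sum fun j hj => hpair i hi j hj
    _ = #T * a + #T ^ 2 * a ^ 2 := by
        simp only [sum_add_distrib, sum_ite_eq, sum_const, nsmul_eq_mul, sum_ite_mem, inter_self]
        ring

theorem stmt4_general (n k : ℕ) (hk : 1 ≤ k) (P : ℕ → ℝ) (hP : MemDk k P)
    {Ω : Type*} [MeasurableSpace Ω] (μ : Measure Ω) [IsProbabilityMeasure μ]
    (N : ℕ → Ω → ℕ) (hmeas : ∀ i, Measurable (N i))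
    (hindep : iIndepFun N μ)
    (hlaw : ∀ i, μ.map (N i) = poissonMeasure (Real.toNNReal (n * P i))) :
    ∫⁻ ω, ENNReal.ofReal
        (((suppSize P : ℝ) - ∑' i, if 0 < N i ω then (1 : ℝ) else 0) ^ 2) ∂μ
      ≤ ENNReal.ofReal ((k : ℝ) ^ 2 * exp (-2 * n / k) + k * exp (-(n : ℝ) / k)) := by
  obtain ⟨T, hT, hS, hcard⟩ := hP.exists_finset_support hk
  have hunseen : ∀ᵐ ω ∂μ, ∀ i ∉ T, N i ω = 0 := ae_all_iff.mpr fun i => by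
    by_cases hi : i ∈ T
    · exact .of_forall fun _ h => absurd hi h
    · refine (ae_eq_zero_of_map_eq_poissonMeasure_zero (hmeas i) ?_).mono fun _ h _ => h
      simpa [not_not.mp ((hT i).not.mp hi)] using hlaw i
  have hmiss : ∀ i ∈ T, μ (N i ⁻¹' {0}) ≤ ENNReal.ofReal (exp (-n / k)) := fun i hi => by
    rw [neg_div]
    refine measure_preimage_zero_le_of_map_eq_poissonMeasure (hmeas i) (hlaw i) ?_
    rw [div_eq_mul_one_div]
    exact mul_le_mul_of_nonneg_left (hP.2 i ((hT i).mp hi)) n.cast_nonneg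
  calc _ = ∫⁻ ω, (∑ i ∈ T, (N i ⁻¹' {0}).indicator (1 : Ω → ℝ≥0∞) ω) ^ 2 ∂μ :=
        lintegral_congr_ae <| hunseen.mono fun ω hω => by
          dsimp only
          rw [hS, card_sub_tsum_ite_pos T (N · ω) hω, ENNReal.ofReal_pow (by positivity),
            ENNReal.ofReal_sum_of_nonneg fun _ _ => by positivity]
          congr 2 with i
          by_cases h : N i ω = 0 <;> simp [h]
    _ ≤ #T * ENNReal.ofReal (exp (-n / k)) + #T ^ 2 * ENNReal.ofReal (exp (-n / k)) ^ 2 :=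
        lintegral_sq_sum_indicator_le T (fun i => hmeas i (measurableSet_singleton 0))
          (fun i _ j _ hij => (hindep.indepFun hij).measure_inter_preimage_eq_mul _ _
            (measurableSet_singleton 0) (measurableSet_singleton 0)) hmiss
    _ ≤ _ := by
        have hexp : exp (-2 * n / k) = exp (-n / k) ^ 2 := by rw [← exp_nat_mul]; ring_nf
        rw [hexp, add_comm, ENNReal.ofReal_add (by positivity) (by positivity),
          ENNReal.ofReal_mul (by positivity), ENNReal.ofReal_mul (by positivity),
          ENNReal.ofReal_pow (by positivity), ENNReal.ofReal_pow (by positivity),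
          ENNReal.ofReal_natCast]
        gcongr

theorem stmt4 (n k : ℕ) (hn : 1 ≤ n) (hk : 1 ≤ k) (P : ℕ → ℝ) (hP : MemDk k P)
    {Ω : Type*} [MeasurableSpace Ω] (μ : Measure Ω) [IsProbabilityMeasure μ]
    (N : ℕ → Ω → ℕ) (hmeas : ∀ i, Measurable (N i))
    (hindep : iIndepFun N μ)
    (hlaw : ∀ i, μ.map (N i) = poissonMeasure (Real.toNNReal (n * P i))) :
    ∫⁻ ω, ENNReal.ofReal
        (((suppSize P : ℝ) - ∑' i, if 0 < N i ω then (1 : ℝ) else 0) ^ 2) ∂μ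
      ≤ ENNReal.ofReal ((k : ℝ) ^ 2 * exp (-2 * n / k) + k * exp (-(n : ℝ) / k)) :=
  stmt4_general n k hk P hP μ N hmeas hindep hlaw
end

section
/- Let b > a ≥ 1, I = [a,b], and L a nonnegative integer. Define E*_1 as the supremum, over pairs of Borel probability measures μ, μ' supported on {0} ∪ I with ∫x dμ = ∫x dμ' = 1 and ∫x^j dμ = ∫x^j dμ' for j = 1, …, L+1, of μ'({0}) − μ({0}). Define E*_2 as the supremum, over pairs of Borel probability measures ν, ν' supported on I with ∫x^j dν = ∫x^j dν' for j = 1, …, L, of ∫(1/x) dν − ∫(1/x) dν'. Then E*_1 = E*_2. -/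
/-!
Size-biasing `dν = x dμ` maps a unit-mean probability measure `μ` on `{0} ∪ [a, b]` to a
probability measure `ν` on `[a, b]`, lowering every moment by one (`∫ x^j dν = ∫ x^(j+1) dμ`) and
recording the atom at `0` as `∫ 1/x dν = 1 - μ {0}`. Conversely
`dμ = (1 - ∫ 1/x dν) δ₀ + (1/x) dν` is a probability measure because `x ≥ a ≥ 1` forces
`∫ 1/x dν ≤ 1`. So the two sets of values coincide, and so do their suprema.
-/

open MeasureTheory Real ENNReal Set

section WithDensity

variable {α : Type*} [MeasurableSpace α] {μ : Measure α} {f : α → ℝ}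

lemma integral_withDensity_ofReal (hf : Measurable f) (hf0 : 0 ≤ᵐ[μ] f) (g : α → ℝ) :
    ∫ x, g x ∂μ.withDensity (fun x => ENNReal.ofReal (f x)) = ∫ x, f x * g x ∂μ := by
  rw [integral_withDensity_eq_integral_toReal_smul hf.ennreal_ofReal
    (ae_of_all _ fun _ => ofReal_lt_top)]
  refine integral_congr_ae ?_
  filter_upwards [hf0] with x hx
  rw [toReal_ofReal hx, smul_eq_mul]

lemma integrable_withDensity_ofReal_iff (hf : Measurable f) (hf0 : 0 ≤ᵐ[μ] f) {g : α → ℝ} :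
    Integrable g (μ.withDensity fun x => ENNReal.ofReal (f x)) ↔
      Integrable (fun x => f x * g x) μ := by
  rw [integrable_withDensity_iff_integrable_smul' hf.ennreal_ofReal
    (ae_of_all _ fun _ => ofReal_lt_top)]
  refine integrable_congr ?_
  filter_upwards [hf0] with x hx
  rw [toReal_ofReal hx, smul_eq_mul]

end WithDensity

noncomputable def sizeBias (μ : Measure ℝ) : Measure ℝ :=
  μ.withDensity fun x => ENNReal.ofReal x

noncomputable def sizeUnbias (ν : Measure ℝ) : Measure ℝ :=
  (1 - ENNReal.ofReal (∫ x, 1 / x ∂ν)) • Measure.dirac 0 +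
    ν.withDensity fun x => ENNReal.ofReal (1 / x)

section SizeBias

variable {μ : Measure ℝ}

lemma integral_sizeBias (h0 : ∀ᵐ x ∂μ, 0 ≤ x) (g : ℝ → ℝ) :
    ∫ x, g x ∂sizeBias μ = ∫ x, x * g x ∂μ :=
  integral_withDensity_ofReal measurable_id h0 g

lemma integral_pow_sizeBias (h0 : ∀ᵐ x ∂μ, 0 ≤ x) (j : ℕ) :
    ∫ x, x ^ j ∂sizeBias μ = ∫ x, x ^ (j + 1) ∂μ := by
  simp_rw [integral_sizeBias h0, pow_succ']

lemma integral_one_div_sizeBias [IsProbabilityMeasure μ] (h0 : ∀ᵐ x ∂μ, 0 ≤ x) :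
    ∫ x, 1 / x ∂sizeBias μ = 1 - μ.real {0} := by
  have hindicator : (fun x : ℝ => x * (1 / x)) = ({0}ᶜ : Set ℝ).indicator 1 := by
    ext x
    by_cases hx : x = 0 <;> simp [hx]
  rw [integral_sizeBias h0, hindicator, integral_indicator_one (measurableSet_singleton 0).compl,
    probReal_compl_eq_one_sub (measurableSet_singleton 0)]

lemma isProbabilityMeasure_sizeBias (h0 : ∀ᵐ x ∂μ, 0 ≤ x) (h1 : ∫ x, x ∂μ = 1) :
    IsProbabilityMeasure (sizeBias μ) := by
  have hint : Integrable (fun x => x) μ := by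
    by_contra h
    rw [integral_undef h] at h1
    exact zero_ne_one h1
  constructor
  rw [sizeBias, withDensity_apply _ MeasurableSet.univ, setLIntegral_univ,
    ← ofReal_integral_eq_lintegral_ofReal hint h0, h1, ofReal_one]

lemma sizeBias_singleton_zero : sizeBias μ {0} = 0 := by
  simp [sizeBias]

lemma sizeBias_compl {s : Set ℝ} (hs : μ ({0} ∪ s)ᶜ = 0) : sizeBias μ sᶜ = 0 := by
  refine measure_mono_null (fun x hx => ?_) (measure_union_null
    (withDensity_absolutelyContinuous μ _ hs) sizeBias_singleton_zero)
  by_cases hx0 : x = 0 <;> simp_all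

end SizeBias

section SizeUnbias

variable {ν : Measure ℝ}

lemma sizeUnbias_compl {s : Set ℝ} (hs : ν sᶜ = 0) : sizeUnbias ν ({0} ∪ s)ᶜ = 0 := by
  have hdirac : Measure.dirac (0 : ℝ) ({0} ∪ s)ᶜ = 0 := by simp
  have hdensity : (ν.withDensity fun x => ENNReal.ofReal (1 / x)) ({0} ∪ s)ᶜ = 0 :=
    withDensity_absolutelyContinuous ν _ <| measure_mono_null (by simp) hs
  rw [sizeUnbias, Measure.add_apply, Measure.smul_apply, hdirac, hdensity, smul_zero, add_zero]

variable (h1 : ∀ᵐ x ∂ν, 1 ≤ x)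
include h1

lemma ae_one_div_nonneg_of_ae_one_le : 0 ≤ᵐ[ν] fun x => 1 / x := by
  filter_upwards [h1] with x hx
  exact one_div_nonneg.mpr (by linarith)

lemma integral_one_div_nonneg_of_ae_one_le : 0 ≤ ∫ x, 1 / x ∂ν :=
  integral_nonneg_of_ae (ae_one_div_nonneg_of_ae_one_le h1)

lemma integral_mul_sizeUnbias {g : ℝ → ℝ} (hg : Integrable g ν) :
    ∫ x, x * g x ∂sizeUnbias ν = ∫ x, g x ∂ν := by
  have hmeas : Measurable fun x : ℝ => 1 / x := measurable_const.div measurable_id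
  have hpos := ae_one_div_nonneg_of_ae_one_le h1
  -- the density `1 / x` cancels the factor `x`, which vanishes on the atom at `0`
  have hcancel : (fun x => 1 / x * (x * g x)) =ᵐ[ν] g := by
    filter_upwards [h1] with x hx
    field_simp
  have hdirac : Integrable (fun x => x * g x)
      ((1 - ENNReal.ofReal (∫ x, 1 / x ∂ν)) • Measure.dirac 0) :=
    (integrable_dirac enorm_lt_top).smul_measure (tsub_le_self.trans_lt one_lt_top).ne
  have hdensity : Integrable (fun x => x * g x) (ν.withDensity fun x => ENNReal.ofReal (1 / x)) :=
    (integrable_withDensity_ofReal_iff hmeas hpos).mpr (hg.congr hcancel.symm)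
  rw [sizeUnbias, integral_add_measure hdirac hdensity, integral_smul_measure, integral_dirac,
    zero_mul, smul_zero, zero_add, integral_withDensity_ofReal hmeas hpos, integral_congr_ae hcancel]

lemma integral_pow_succ_sizeUnbias {j : ℕ} (hj : Integrable (fun x => x ^ j) ν) :
    ∫ x, x ^ (j + 1) ∂sizeUnbias ν = ∫ x, x ^ j ∂ν := by
  simp_rw [pow_succ', integral_mul_sizeUnbias h1 hj]

variable [IsProbabilityMeasure ν]

lemma integrable_one_div_of_ae_one_le : Integrable (fun x => 1 / x) ν :=
  Integrable.of_bound (measurable_const.div measurable_id).aestronglyMeasurable 1 <| by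
    filter_upwards [h1] with x hx
    rw [norm_div, norm_one, Real.norm_of_nonneg (by linarith)]
    exact div_le_one_of_le₀ hx (by linarith)

lemma integral_one_div_le_one_of_ae_one_le : ∫ x, 1 / x ∂ν ≤ 1 :=
  calc ∫ x, 1 / x ∂ν ≤ ∫ _, 1 ∂ν :=
        integral_mono_ae (integrable_one_div_of_ae_one_le h1) (integrable_const 1) <| by
          filter_upwards [h1] with x hx
          exact div_le_one_of_le₀ hx (by linarith)
    _ = 1 := by simp

lemma sizeUnbias_real_singleton_zero : (sizeUnbias ν).real {0} = 1 - ∫ x, 1 / x ∂ν := by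
  have hν0 : ν {0} = 0 := measure_mono_null (fun x hx => by simp_all) (ae_iff.mp h1)
  have hdensity : (ν.withDensity fun x => ENNReal.ofReal (1 / x)) {0} = 0 :=
    withDensity_absolutelyContinuous ν _ hν0
  rw [measureReal_def, sizeUnbias, Measure.add_apply, Measure.smul_apply, hdensity, add_zero,
    Measure.dirac_apply_of_mem (mem_singleton 0), smul_eq_mul, mul_one,
    toReal_sub_of_le (ofReal_le_one.mpr (integral_one_div_le_one_of_ae_one_le h1)) one_ne_top,
    toReal_one, toReal_ofReal (integral_one_div_nonneg_of_ae_one_le h1)]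

lemma integral_id_sizeUnbias : ∫ x, x ∂sizeUnbias ν = 1 := by
  simpa using integral_mul_sizeUnbias h1 (integrable_const (1 : ℝ))

lemma isProbabilityMeasure_sizeUnbias : IsProbabilityMeasure (sizeUnbias ν) := by
  have hpos := ae_one_div_nonneg_of_ae_one_le h1
  have hdensity : (ν.withDensity fun x => ENNReal.ofReal (1 / x)) univ =
      ENNReal.ofReal (∫ x, 1 / x ∂ν) := by
    rw [withDensity_apply _ MeasurableSet.univ, setLIntegral_univ,
      ofReal_integral_eq_lintegral_ofReal (integrable_one_div_of_ae_one_le h1) hpos]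
  constructor
  rw [sizeUnbias, Measure.add_apply, Measure.smul_apply, hdensity, measure_univ, smul_eq_mul,
    mul_one, tsub_add_cancel_of_le (ofReal_le_one.mpr (integral_one_div_le_one_of_ae_one_le h1))]

end SizeUnbias

lemma integrable_of_measure_compl_Icc_eq_zero {ν : Measure ℝ} [IsFiniteMeasure ν] {a b : ℝ}
    {f : ℝ → ℝ} (hf : Continuous f) (hs : ν (Icc a b)ᶜ = 0) : Integrable f ν := by
  rw [← Measure.restrict_eq_self_of_ae_mem (ae_iff.mpr hs)]
  exact hf.integrableOn_Icc

theorem stmt10_general (a b : ℝ) (ha : 1 ≤ a) (L : ℕ) :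
    sSup {d : ℝ | ∃ μ μ' : Measure ℝ,
        IsProbabilityMeasure μ ∧ IsProbabilityMeasure μ' ∧
        μ ({0} ∪ Set.Icc a b)ᶜ = 0 ∧ μ' ({0} ∪ Set.Icc a b)ᶜ = 0 ∧
        (∫ x, x ∂μ) = 1 ∧ (∫ x, x ∂μ') = 1 ∧
        (∀ j : ℕ, 1 ≤ j → j ≤ L + 1 → (∫ x, x ^ j ∂μ) = ∫ x, x ^ j ∂μ') ∧
        d = (μ' {0}).toReal - (μ {0}).toReal}
      = sSup {d : ℝ | ∃ ν ν' : Measure ℝ,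
          IsProbabilityMeasure ν ∧ IsProbabilityMeasure ν' ∧
          ν (Set.Icc a b)ᶜ = 0 ∧ ν' (Set.Icc a b)ᶜ = 0 ∧
          (∀ j : ℕ, 1 ≤ j → j ≤ L → (∫ x, x ^ j ∂ν) = ∫ x, x ^ j ∂ν') ∧
          d = (∫ x, 1 / x ∂ν) - ∫ x, 1 / x ∂ν'} := by
  have nonneg {μ : Measure ℝ} (hs : μ ({0} ∪ Icc a b)ᶜ = 0) : ∀ᵐ x ∂μ, 0 ≤ x :=
    (ae_iff.mpr hs).mono fun x hx => hx.elim (fun h => h.ge) fun h => by linarith [h.1]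
  have one_le {ν : Measure ℝ} (hs : ν (Icc a b)ᶜ = 0) : ∀ᵐ x ∂ν, 1 ≤ x :=
    (ae_iff.mpr hs).mono fun x hx => ha.trans hx.1
  congr 1
  ext d
  constructor
  · rintro ⟨μ, μ', hμ, hμ', hμs, hμ's, hμ1, hμ'1, hmom, rfl⟩
    refine ⟨sizeBias μ, sizeBias μ', isProbabilityMeasure_sizeBias (nonneg hμs) hμ1,
      isProbabilityMeasure_sizeBias (nonneg hμ's) hμ'1, sizeBias_compl hμs, sizeBias_compl hμ's,
      fun j hj hjL => ?_, ?_⟩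
    · rw [integral_pow_sizeBias (nonneg hμs), integral_pow_sizeBias (nonneg hμ's),
        hmom (j + 1) (by omega) (by omega)]
    · rw [integral_one_div_sizeBias (nonneg hμs), integral_one_div_sizeBias (nonneg hμ's),
        measureReal_def, measureReal_def]
      ring
  · rintro ⟨ν, ν', hν, hν', hνs, hν's, hmom, rfl⟩
    refine ⟨sizeUnbias ν, sizeUnbias ν', isProbabilityMeasure_sizeUnbias (one_le hνs),
      isProbabilityMeasure_sizeUnbias (one_le hν's), sizeUnbias_compl hνs, sizeUnbias_compl hν's,
      integral_id_sizeUnbias (one_le hνs), integral_id_sizeUnbias (one_le hν's),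
      fun j hj hjL => ?_, ?_⟩
    · obtain ⟨k, rfl⟩ : ∃ k, j = k + 1 := ⟨j - 1, by omega⟩
      rw [integral_pow_succ_sizeUnbias (one_le hνs)
          (integrable_of_measure_compl_Icc_eq_zero (continuous_pow k) hνs),
        integral_pow_succ_sizeUnbias (one_le hν's)
          (integrable_of_measure_compl_Icc_eq_zero (continuous_pow k) hν's)]
      rcases k.eq_zero_or_pos with rfl | hk
      · simp
      · exact hmom k hk (by omega)
    · rw [← measureReal_def, ← measureReal_def, sizeUnbias_real_singleton_zero (one_le hνs),
        sizeUnbias_real_singleton_zero (one_le hν's)]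
      ring

theorem stmt10 (a b : ℝ) (ha : 1 ≤ a) (hab : a < b) (L : ℕ) :
    sSup {d : ℝ | ∃ μ μ' : Measure ℝ,
        IsProbabilityMeasure μ ∧ IsProbabilityMeasure μ' ∧
        μ ({0} ∪ Set.Icc a b)ᶜ = 0 ∧ μ' ({0} ∪ Set.Icc a b)ᶜ = 0 ∧
        (∫ x, x ∂μ) = 1 ∧ (∫ x, x ∂μ') = 1 ∧
        (∀ j : ℕ, 1 ≤ j → j ≤ L + 1 → (∫ x, x ^ j ∂μ) = ∫ x, x ^ j ∂μ') ∧
        d = (μ' {0}).toReal - (μ {0}).toReal}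
      = sSup {d : ℝ | ∃ ν ν' : Measure ℝ,
          IsProbabilityMeasure ν ∧ IsProbabilityMeasure ν' ∧
          ν (Set.Icc a b)ᶜ = 0 ∧ ν' (Set.Icc a b)ᶜ = 0 ∧
          (∀ j : ℕ, 1 ≤ j → j ≤ L → (∫ x, x ^ j ∂ν) = ∫ x, x ^ j ∂ν') ∧
          d = (∫ x, 1 / x ∂ν) - ∫ x, 1 / x ∂ν'} :=
  stmt10_general a b ha L
end

section
/- Consider an urn with k balls, k_i of color i (k_i ∈ ℤ≥0, Σ_i k_i = k), S = #{i : k_i > 0}, and p_i = k_i/k. Assume Poisson sampling: N_i independent with N_i ~ Poisson(n·p_i). Let L = α·log k and M = β·k·log k / n be integers with β > α > 0. Given w = (w_1,…,w_L) ∈ ℝ^L, set u_j = w_j·j!·(k/(nM))^j for j ∈ {1,…,L} and u_j = 0 otherwise; let Ŝ = Σ_i g(N_i) with g(0) = 0 and g(j) = 1 + u_j for j ≥ 1; let Ŝ_plug = Σ_i 1{N_i > 0} and S̃ = min(max(Ŝ, Ŝ_plug), k). Let B be the M × L matrix with entries B_{m,j} = (m/M)^j and 1 the all-ones vector in ℝ^M.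 Then E(S̃ − S)² ≤ k²·e^{−2n/k}·‖Bw − 1‖_∞² + k·e^{−n/k} + k·max_{m ∈ {1,…,M}} E_{N ~ Poisson(nm/k)}[u_N²] + k^{−(β − α·log(eβ/α) − 3)}. -/
/-!
Let `A` be the colours with `1 ≤ k_i ≤ M`. On the event that every other colour is seen more than
`L` times, each of those colours contributes exactly `1` to `Ŝ` (as `u` vanishes beyond `L`), so
`Ŝ - S` is the sum over `A` of the independent bounded variables `g(N_i) - 1`, and clamping into
`[Ŝ_plug, k] ∋ S` only decreases the error. For `N ~ Poisson(λ)` one has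
`E[g(N) - 1] = e^{-λ} ((Bw)_m - 1)` with `m = kλ/n`, and `E[(g(N) - 1)²] = E[u_N²] + e^{-λ}`,
which gives the bias and variance terms. A colour with `k_i > M` has rate `λ ≥ β log k`, so by
the Chernoff bound `P(N ≤ L) ≤ e^{L-λ} (λ/L)^L` it is seen at most `L` times with probability at
most `k^{-(β - α log(eβ/α))}`; on that event the error is at most `k²`.
-/

open MeasureTheory ProbabilityTheory Real ENNReal
open scoped Nat

lemma sq_clamp_sub_le {a b s x : ℝ} (has : a ≤ s) (hsb : s ≤ b) :
    (min (max x a) b - s) ^ 2 ≤ (x - s) ^ 2 := by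
  rcases le_total x a with hxa | hax
  · rw [max_eq_right hxa, min_eq_left (has.trans hsb)]
    nlinarith
  · rw [max_eq_left hax]
    rcases le_total x b with hxb | hbx
    · rw [min_eq_left hxb]
    · rw [min_eq_right hbx]
      nlinarith

lemma sq_sum_le_of_abs_le {ι : Type*} {s : Finset ι} {a : ι → ℝ} {b K : ℝ} (hb : 0 ≤ b)
    (hab : ∀ i ∈ s, |a i| ≤ b) (hsK : (s.card : ℝ) ≤ K) : (∑ i ∈ s, a i) ^ 2 ≤ (K * b) ^ 2 := by
  have habs : |∑ i ∈ s, a i| ≤ K * b :=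
    calc |∑ i ∈ s, a i| ≤ ∑ i ∈ s, |a i| := Finset.abs_sum_le_sum_abs _ _
      _ ≤ s.card * b := by simpa using Finset.sum_le_sum hab
      _ ≤ K * b := by gcongr
  rw [← sq_abs]
  gcongr

lemma Finset.le_ciSup₂_of_mem {ι α : Type*} [ConditionallyCompleteLattice α] {s : Finset ι}
    (f : ι → α) {i : ι} (hi : i ∈ s) : f i ≤ ⨆ j ∈ s, f j :=
  le_ciSup₂ (f := fun j (_ : j ∈ s) => f j)
    ((s.finite_toSet.image f).bddAbove.mono (by
      rintro _ ⟨_, ⟨j, rfl⟩, hj, rfl⟩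
      exact ⟨j, hj, rfl⟩)) i hi

lemma Function.support_finite_of_summable_natCast {ι : Type*} {f : ι → ℕ}
    (hf : Summable fun i => (f i : ℝ)) : (Function.support f).Finite := by
  refine (hf.tendsto_cofinite_zero.eventually (gt_mem_nhds one_pos)).mono fun i hi => ?_
  simpa using hi

lemma Function.card_toFinset_support_le_of_hasSum_natCast {ι : Type*} {f : ι → ℕ} {k : ℕ}
    (hf : HasSum (fun i => (f i : ℝ)) k) (hfin : (Function.support f).Finite) :
    (hfin.toFinset.card : ℝ) ≤ k := by
  have hsum : ∑ i ∈ hfin.toFinset, (f i : ℝ) = k := by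
    rw [← hf.tsum_eq]
    exact (tsum_eq_sum fun i hi => by simpa using hi).symm
  rw [← hsum, Finset.card_eq_sum_ones, Nat.cast_sum]
  exact Finset.sum_le_sum fun i hi => by
    exact_mod_cast Nat.one_le_iff_ne_zero.2 (hfin.mem_toFinset.1 hi)

lemma abs_le_sum_Iic_abs_of_eq_zero {f : ℕ → ℝ} {L : ℕ} (hf : ∀ j, L < j → f j = 0) (j : ℕ) :
    |f j| ≤ ∑ i ∈ Finset.Iic L, |f i| := by
  rcases le_or_gt j L with hj | hj
  · exact Finset.single_le_sum (fun i _ => abs_nonneg (f i)) (Finset.mem_Iic.2 hj)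
  · rw [hf j hj, abs_zero]
    exact Finset.sum_nonneg fun i _ => abs_nonneg (f i)

lemma sq_mul_exp_mul_pow_le_rpow {k α β : ℝ} {L : ℕ} (hk : 1 ≤ k) (hα : 0 < α) (hβ : 0 < β)
    (hL : (L : ℝ) = α * log k) (hL0 : 0 < L) :
    k ^ 2 * (exp (L - β * log k) * (β * log k / L) ^ L)
      ≤ k ^ (-(β - α * log (exp 1 * β / α) - 3)) := by
  have hk0 : 0 < k := zero_lt_one.trans_le hk
  have hlogk : 0 ≤ log k := log_nonneg hk
  have hlogk' : log k ≠ 0 := by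
    rintro h
    rw [h, mul_zero] at hL
    exact hL0.ne' (by exact_mod_cast hL)
  have hratio : β * log k / L = exp (log (β / α)) := by
    rw [exp_log (div_pos hβ hα), hL]
    field_simp
  have hlog : log (exp 1 * β / α) = 1 + log (β / α) := by
    rw [mul_div_assoc, log_mul (exp_pos 1).ne' (div_pos hβ hα).ne', log_exp]
  rw [hratio, ← exp_nat_mul, ← exp_add, rpow_def_of_pos hk0, hlog,
    ← Real.rpow_natCast, rpow_def_of_pos hk0, ← exp_add]
  refine exp_le_exp.2 ?_
  rw [hL]
  push_cast
  nlinarith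

section Moments

variable {Ω : Type*} [MeasurableSpace Ω] {μ : Measure Ω}

lemma memLp_comp_of_eq_zero [IsFiniteMeasure μ] {N : Ω → ℕ} (hN : Measurable N) {f : ℕ → ℝ}
    {L : ℕ} (hf : ∀ j, L < j → f j = 0) (p : ℝ≥0∞) : MemLp (fun ω => f (N ω)) p μ :=
  MemLp.of_bound (Measurable.of_discrete.comp hN).aestronglyMeasurable _
    (ae_of_all _ fun ω => abs_le_sum_Iic_abs_of_eq_zero hf (N ω))

lemma lintegral_ofReal_le_add_mul_measure_compl {f h : Ω → ℝ} {E : Set Ω} (hE : MeasurableSet E)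
    (hh : Measurable h) (hfh : ∀ᵐ ω ∂μ, ω ∈ E → f ω ≤ h ω) {c : ℝ} (hfc : ∀ ω, f ω ≤ c) :
    ∫⁻ ω, ENNReal.ofReal (f ω) ∂μ
      ≤ ∫⁻ ω, ENNReal.ofReal (h ω) ∂μ + ENNReal.ofReal c * μ Eᶜ := by
  rw [← lintegral_indicator_const hE.compl, ← lintegral_add_left hh.ennreal_ofReal]
  refine lintegral_mono_ae (hfh.mono fun ω hω => ?_)
  by_cases hωE : ω ∈ E
  · rw [Set.indicator_of_notMem (Set.notMem_compl_iff.2 hωE), add_zero]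
    exact ENNReal.ofReal_le_ofReal (hω hωE)
  · rw [Set.indicator_of_mem hωE]
    exact (ENNReal.ofReal_le_ofReal (hfc ω)).trans le_add_self

lemma lintegral_sq_sum_le_of_pairwise_indepFun [IsProbabilityMeasure μ] {ι : Type*}
    {s : Finset ι} {X : ι → Ω → ℝ} (hX : ∀ i ∈ s, MemLp (X i) 2 μ)
    (hindep : Set.Pairwise s fun i j => IndepFun (X i) (X j) μ) :
    ∫⁻ ω, ENNReal.ofReal ((∑ i ∈ s, X i ω) ^ 2) ∂μ
      ≤ ENNReal.ofReal ((∑ i ∈ s, ∫ ω, X i ω ∂μ) ^ 2)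
        + ∑ i ∈ s, ∫⁻ ω, ENNReal.ofReal (X i ω ^ 2) ∂μ := by
  -- `E[Y²] = Var Y + (E Y)²`, and the variance of the sum is the sum of the variances
  have hreal : ∫ ω, (∑ i ∈ s, X i ω) ^ 2 ∂μ
      ≤ (∑ i ∈ s, ∫ ω, X i ω ∂μ) ^ 2 + ∑ i ∈ s, ∫ ω, X i ω ^ 2 ∂μ := by
    have hvar := variance_eq_sub (memLp_finsetSum' s hX)
    simp only [Pi.pow_apply, Finset.sum_apply] at hvar
    rw [IndepFun.variance_sum hX hindep,
      integral_finsetSum s fun i hi => (hX i hi).integrable one_le_two] at hvar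
    have hle : ∑ i ∈ s, variance (X i) μ ≤ ∑ i ∈ s, ∫ ω, X i ω ^ 2 ∂μ :=
      Finset.sum_le_sum fun i hi => variance_le_expectation_sq (hX i hi).aestronglyMeasurable
    linarith
  have hsq : ∀ i ∈ s, ∫⁻ ω, ENNReal.ofReal (X i ω ^ 2) ∂μ = ENNReal.ofReal (∫ ω, X i ω ^ 2 ∂μ) :=
    fun i hi => (ofReal_integral_eq_lintegral_ofReal (hX i hi).integrable_sq
      (ae_of_all _ fun ω => sq_nonneg _)).symm
  rw [Finset.sum_congr rfl hsq, ← ENNReal.ofReal_sum_of_nonneg fun i _ =>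
      integral_nonneg fun ω => sq_nonneg _,
    ← ofReal_integral_eq_lintegral_ofReal (memLp_finsetSum s hX).integrable_sq
      (ae_of_all _ fun ω => sq_nonneg _)]
  exact (ENNReal.ofReal_le_ofReal hreal).trans ENNReal.ofReal_add_le

end Moments

namespace ProbabilityTheory

lemma poissonMeasure_zero : poissonMeasure 0 = Measure.dirac 0 := by
  refine Measure.ext_of_singleton fun j => ?_
  rw [poissonMeasure_singleton]
  rcases j with _ | j <;> simp

lemma HasLaw.ae_eq_zero_of_poissonMeasure_zero {Ω : Type*} [MeasurableSpace Ω] {μ : Measure Ω}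
    {N : Ω → ℕ} (hN : HasLaw N (poissonMeasure 0) μ) : ∀ᵐ ω ∂μ, N ω = 0 :=
  (poissonMeasure_zero ▸ hN).ae_eq_of_dirac

lemma poissonMeasure_Iic_zero (r : NNReal) :
    poissonMeasure r (Set.Iic 0) = ENNReal.ofReal (exp (-r)) := by
  rw [show Set.Iic 0 = {0} by ext; simp, poissonMeasure_singleton]
  simp

lemma poissonMeasure_Iic_le {r : NNReal} {L : ℕ} {x : ℝ} (hL : 0 < L) (hLx : (L : ℝ) ≤ x)
    (hxr : x ≤ r) : poissonMeasure r (Set.Iic L) ≤ ENNReal.ofReal (exp (L - x) * (x / L) ^ L) := by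
  have hL0 : (0 : ℝ) < L := by exact_mod_cast hL
  set t : ℝ := L / x with ht
  have ht0 : 0 < t := div_pos hL0 (hL0.trans_le hLx)
  have ht1 : t ≤ 1 := div_le_one_of_le₀ hLx (hL0.le.trans hLx)
  have htx : t * x = L := div_mul_cancel₀ _ (hL0.trans_le hLx).ne'
  rw [show Set.Iic L = ↑(Finset.range (L + 1)) by ext; simp, ← sum_measure_singleton]
  simp_rw [poissonMeasure_singleton]
  rw [← ENNReal.ofReal_sum_of_nonneg fun j _ => by positivity]
  refine ENNReal.ofReal_le_ofReal ?_
  -- lowering the rate to `t r` costs at most the factor `t⁻ᴸ` on each term with `j ≤ L`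
  have hterm : ∀ j ∈ Finset.range (L + 1), exp (-r) * r ^ j / j !
      ≤ exp (-r) * (t ^ L)⁻¹ * ((t * r) ^ j / j !) := by
    intro j hj
    have htj : t ^ L ≤ t ^ j :=
      pow_le_pow_of_le_one ht0.le ht1 (Nat.lt_succ_iff.1 (Finset.mem_range.1 hj))
    calc exp (-r) * r ^ j / j ! = exp (-r) * r ^ j / j ! * 1 := (mul_one _).symm
      _ ≤ exp (-r) * r ^ j / j ! * (t ^ j / t ^ L) := by
          gcongr
          exact (one_le_div (by positivity)).2 htj
      _ = exp (-r) * (t ^ L)⁻¹ * ((t * r) ^ j / j !) := by ring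
  calc ∑ j ∈ Finset.range (L + 1), exp (-r) * r ^ j / j !
      ≤ ∑ j ∈ Finset.range (L + 1), exp (-r) * (t ^ L)⁻¹ * ((t * r) ^ j / j !) :=
        Finset.sum_le_sum hterm
    _ = exp (-r) * (t ^ L)⁻¹ * ∑ j ∈ Finset.range (L + 1), (t * r) ^ j / j ! := by
        rw [Finset.mul_sum]
    _ ≤ exp (-r) * (t ^ L)⁻¹ * exp (t * r) := by
        gcongr
        exact sum_le_exp_of_nonneg (by positivity) _
    _ = exp (-r + t * r) * (x / L) ^ L := by
        rw [exp_add, ht, ← inv_pow, inv_div]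
        ring
    _ ≤ exp (L - x) * (x / L) ^ L :=
        mul_le_mul_of_nonneg_right (exp_le_exp.2 (by nlinarith))
          (pow_nonneg (div_nonneg (hL0.le.trans hLx) hL0.le) _)

end ProbabilityTheory

namespace DistinctElements

variable {L : ℕ} {c : ℝ} {w u g : ℕ → ℝ}

lemma estimator_eq_one_of_lt (hu : ∀ j, u j = if 1 ≤ j ∧ j ≤ L then w j * j ! * c ^ j else 0)
    (hg : ∀ j, 1 ≤ j → g j = 1 + u j) {j : ℕ} (hj : L < j) : g j = 1 := by
  rw [hg j (by omega), hu j, if_neg (by omega), add_zero]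

lemma sq_clamp_estimator_sub_card_le {ι : Type*} [DecidableEq ι] {T A : Finset ι} (hA : A ⊆ T)
    {ν : ι → ℕ} {K : ℝ} (h0 : ∀ i ∉ T, ν i = 0) (hlarge : ∀ i ∈ T \ A, L < ν i)
    (hg0 : g 0 = 0) (hgL : ∀ j, L < j → g j = 1) (hTK : (T.card : ℝ) ≤ K) :
    (min (max (∑' i, g (ν i)) (∑' i, if 0 < ν i then (1 : ℝ) else 0)) K - T.card) ^ 2
      ≤ (∑ i ∈ A, (g (ν i) - 1)) ^ 2 := by
  have hplug : ∑' i, (if 0 < ν i then (1 : ℝ) else 0) ≤ T.card := by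
    rw [tsum_eq_sum (s := T) fun i hi => by simp [h0 i hi], Finset.sum_boole]
    exact_mod_cast Finset.card_filter_le T _
  have hhat : ∑' i, g (ν i) - T.card = ∑ i ∈ A, (g (ν i) - 1) := by
    rw [tsum_eq_sum (s := T) fun i hi => by rw [h0 i hi, hg0], Finset.card_eq_sum_ones,
      Nat.cast_sum, Nat.cast_one, ← Finset.sum_sub_distrib]
    refine (Finset.sum_subset hA fun i hiT hiA => ?_).symm
    rw [hgL _ (hlarge i (Finset.mem_sdiff.2 ⟨hiT, hiA⟩)), sub_self]
  rw [← hhat]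
  exact sq_clamp_sub_le hplug hTK

lemma sq_clamp_estimator_sub_le_sq {ι : Type*} {ν : ι → ℕ} {S K : ℝ} (hS : 0 ≤ S) (hSK : S ≤ K) :
    (min (max (∑' i, g (ν i)) (∑' i, if 0 < ν i then (1 : ℝ) else 0)) K - S) ^ 2 ≤ K ^ 2 := by
  have hplug : 0 ≤ ∑' i, (if 0 < ν i then (1 : ℝ) else 0) :=
    tsum_nonneg fun i => by split_ifs <;> norm_num
  refine sq_le_sq.2 ((abs_sub_le_of_nonneg_of_le ?_ (min_le_right _ _) hS hSK).trans
    (le_abs_self _))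
  exact le_min (hplug.trans (le_max_right _ _)) (hS.trans hSK)

lemma integral_estimator_sub_one_poissonMeasure (r : NNReal)
    (hu : ∀ j, u j = if 1 ≤ j ∧ j ≤ L then w j * j ! * c ^ j else 0)
    (hg0 : g 0 = 0) (hg : ∀ j, 1 ≤ j → g j = 1 + u j) :
    ∫ j, (g j - 1) ∂poissonMeasure r
      = exp (-r) * ((∑ j ∈ Finset.Icc 1 L, w j * (c * r) ^ j) - 1) := by
  have hsupp : ∀ j ∉ insert 0 (Finset.Icc 1 L), (exp (-r) * r ^ j / j ! : ℝ) • (g j - 1) = 0 := by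
    intro j hj
    simp only [Finset.mem_insert, Finset.mem_Icc, not_or, not_and_or, not_le] at hj
    rw [estimator_eq_one_of_lt hu hg (by omega), sub_self, smul_zero]
  rw [integral_poissonMeasure, tsum_eq_sum hsupp, Finset.sum_insert (by simp), mul_sub,
    Finset.mul_sum, hg0]
  have hterm : ∀ j ∈ Finset.Icc 1 L,
      (exp (-r) * r ^ j / j ! : ℝ) • (g j - 1) = exp (-r) * (w j * (c * r) ^ j) := by
    intro j hj
    obtain ⟨h1, hL⟩ := Finset.mem_Icc.1 hj
    rw [hg j h1, hu j, if_pos ⟨h1, hL⟩, smul_eq_mul]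
    field_simp
    ring
  rw [Finset.sum_congr rfl hterm]
  simp
  ring

lemma lintegral_sq_estimator_sub_one_poissonMeasure (r : NNReal) (hu0 : u 0 = 0)
    (hg0 : g 0 = 0) (hg : ∀ j, 1 ≤ j → g j = 1 + u j) :
    ∫⁻ j, ENNReal.ofReal ((g j - 1) ^ 2) ∂poissonMeasure r
      = ∫⁻ j, ENNReal.ofReal (u j ^ 2) ∂poissonMeasure r + ENNReal.ofReal (exp (-r)) := by
  have hsplit : ∀ j, ENNReal.ofReal ((g j - 1) ^ 2)
      = ENNReal.ofReal (u j ^ 2) + ({0} : Set ℕ).indicator 1 j := by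
    rintro (_ | j)
    · simp [hg0, hu0]
    · simp [hg (j + 1) (by omega)]
  simp_rw [hsplit]
  rw [lintegral_add_right _ (measurable_one.indicator (measurableSet_singleton 0)),
    lintegral_indicator_one (measurableSet_singleton 0), poissonMeasure_singleton]
  simp

variable {k n M m : ℕ}

lemma exp_neg_rate_le (hm : 1 ≤ m) :
    exp (-(Real.toNNReal (n * m / k) : ℝ)) ≤ exp (-n / k) := by
  rw [Real.coe_toNNReal _ (by positivity), exp_le_exp, neg_div, neg_le_neg_iff]
  exact div_le_div_of_nonneg_right (le_mul_of_one_le_right n.cast_nonneg (by exact_mod_cast hm))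
    k.cast_nonneg

lemma abs_integral_estimator_sub_one_le (hk : 0 < k) (hn : 0 < n) (hm : 1 ≤ m)
    (hu : ∀ j, u j = if 1 ≤ j ∧ j ≤ L then w j * j ! * ((k : ℝ) / (n * M)) ^ j else 0)
    (hg0 : g 0 = 0) (hg : ∀ j, 1 ≤ j → g j = 1 + u j) :
    |∫ j, (g j - 1) ∂poissonMeasure (Real.toNNReal (n * m / k))|
      ≤ exp (-n / k) * |(∑ j ∈ Finset.Icc 1 L, w j * ((m : ℝ) / M) ^ j) - 1| := by
  have hrescale : (k : ℝ) / (n * M) * (Real.toNNReal (n * m / k) : ℝ) = m / M := by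
    rw [Real.coe_toNNReal _ (by positivity)]
    field_simp
  rw [integral_estimator_sub_one_poissonMeasure _ hu hg0 hg, hrescale, abs_mul,
    abs_of_pos (exp_pos _)]
  exact mul_le_mul_of_nonneg_right (exp_neg_rate_le hm) (abs_nonneg _)

lemma ofReal_sq_mul_poissonMeasure_Iic_le {α β : ℝ} (hk : 1 < k) (hn : 0 < n) (hα : 0 < α)
    (hαβ : α < β) (hL : (L : ℝ) = α * Real.log k) (hM : (M : ℝ) = β * k * Real.log k / n)
    (hm : M ≤ m) :
    ENNReal.ofReal (k ^ 2) * poissonMeasure (Real.toNNReal (n * m / k)) (Set.Iic L)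
      ≤ ENNReal.ofReal ((k : ℝ) ^ (-(β - α * Real.log (exp 1 * β / α) - 3))) := by
  have hk1 : (1 : ℝ) < k := by exact_mod_cast hk
  have hlogk : 0 < Real.log k := Real.log_pos hk1
  have hL0 : 0 < L := by exact_mod_cast (hL ▸ mul_pos hα hlogk : (0 : ℝ) < L)
  have hLx : (L : ℝ) ≤ β * Real.log k := hL ▸ mul_le_mul_of_nonneg_right hαβ.le hlogk.le
  -- `n M / k = β log k` is the least rate of a colour with more than `M` balls
  have hr : β * Real.log k ≤ (Real.toNNReal (n * m / k) : ℝ) := by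
    have hMm : (M : ℝ) ≤ m := by exact_mod_cast hm
    rw [Real.coe_toNNReal _ (by positivity),
      show β * Real.log k = n * M / k by rw [hM]; field_simp]
    gcongr
  calc ENNReal.ofReal (k ^ 2) * poissonMeasure (Real.toNNReal (n * m / k)) (Set.Iic L)
      ≤ ENNReal.ofReal (k ^ 2)
          * ENNReal.ofReal (exp (L - β * Real.log k) * (β * Real.log k / L) ^ L) := by
        gcongr
        exact poissonMeasure_Iic_le hL0 hLx hr
    _ = ENNReal.ofReal (k ^ 2 * (exp (L - β * Real.log k) * (β * Real.log k / L) ^ L)) :=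
        (ENNReal.ofReal_mul (by positivity)).symm
    _ ≤ _ := ENNReal.ofReal_le_ofReal
        (sq_mul_exp_mul_pow_le_rpow hk1.le hα (hα.trans hαβ) hL hL0)

end DistinctElements

open DistinctElements

theorem stmt11 (k n : ℕ) (hk : 1 ≤ k) (hn : 1 ≤ n)
    (kball : ℕ → ℕ) (hsum : HasSum (fun i => (kball i : ℝ)) k)
    (L M : ℕ) (α β : ℝ) (hα : 0 < α) (hαβ : α < β)
    (hL : (L : ℝ) = α * Real.log k) (hM : (M : ℝ) = β * k * Real.log k / n)
    (w : ℕ → ℝ)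
    {Ω : Type*} [MeasurableSpace Ω] (μ : Measure Ω) [IsProbabilityMeasure μ]
    (N : ℕ → Ω → ℕ) (hmeas : ∀ i, Measurable (N i))
    (hindep : iIndepFun N μ)
    (hlaw : ∀ i, μ.map (N i) = poissonMeasure (Real.toNNReal ((n : ℝ) * kball i / k)))
    -- the coefficients `u_j` and the function `g`
    (u : ℕ → ℝ) (hu : ∀ j, u j = if 1 ≤ j ∧ j ≤ L then
      w j * (Nat.factorial j) * ((k : ℝ) / ((n : ℝ) * M)) ^ j else 0)
    (g : ℕ → ℝ) (hg0 : g 0 = 0) (hg : ∀ j, 1 ≤ j → g j = 1 + u j)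
    -- the estimators
    (Shat Splug Stilde : Ω → ℝ)
    (hShat : ∀ ω, Shat ω = ∑' i, g (N i ω))
    (hSplug : ∀ ω, Splug ω = ∑' i, if 0 < N i ω then (1 : ℝ) else 0)
    (hStilde : ∀ ω, Stilde ω = min (max (Shat ω) (Splug ω)) (k : ℝ)) :
    (∫⁻ ω, ENNReal.ofReal
        ((Stilde ω - (Set.ncard {i | kball i ≠ 0} : ℝ)) ^ 2) ∂μ)
      ≤ ENNReal.ofReal ((k : ℝ) ^ 2 * exp (-2 * n / k) *
            (⨆ m ∈ Finset.Icc 1 M,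
              |(∑ j ∈ Finset.Icc 1 L, w j * ((m : ℝ) / M) ^ j) - 1|) ^ 2)
        + ENNReal.ofReal ((k : ℝ) * exp (-(n : ℝ) / k))
        + (k : ℝ≥0∞) * ⨆ m ∈ Finset.Icc 1 M,
            ∫⁻ x, ENNReal.ofReal ((u x) ^ 2)
              ∂(poissonMeasure (Real.toNNReal ((n : ℝ) * m / k)))
        + ENNReal.ofReal ((k : ℝ) ^ (-(β - α * Real.log (Real.exp 1 * β / α) - 3))) := by
  have hN : ∀ i, HasLaw (N i) (poissonMeasure (Real.toNNReal ((n : ℝ) * kball i / k))) μ :=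
    fun i => ⟨(hmeas i).aemeasurable, hlaw i⟩
  have hfin := Function.support_finite_of_summable_natCast hsum.summable
  set T := hfin.toFinset
  have hTk : (T.card : ℝ) ≤ k := Function.card_toFinset_support_le_of_hasSum_natCast hsum hfin
  rw [show Set.ncard {i | kball i ≠ 0} = T.card from Set.ncard_eq_toFinset_card _ hfin]
  have hpos : ∀ i ∈ T, 1 ≤ kball i := fun i hi =>
    Nat.one_le_iff_ne_zero.2 (hfin.mem_toFinset.1 hi)
  set A := T.filter (kball · ≤ M)
  have hAT : A ⊆ T := Finset.filter_subset _ T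
  have hmemA : ∀ i ∈ A, kball i ∈ Finset.Icc 1 M := fun i hi =>
    Finset.mem_Icc.2 ⟨hpos i (hAT hi), (Finset.mem_filter.1 hi).2⟩
  set X : ℕ → Ω → ℝ := fun i ω => g (N i ω) - 1
  set D := ⨆ m ∈ Finset.Icc 1 M, |(∑ j ∈ Finset.Icc 1 L, w j * ((m : ℝ) / M) ^ j) - 1|
  -- the supremum in the statement extends to its end, so it also covers the last summand
  set V := ⨆ m ∈ Finset.Icc 1 M, ∫⁻ x, ENNReal.ofReal ((u x) ^ 2)
      ∂(poissonMeasure (Real.toNNReal ((n : ℝ) * m / k)))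
        + ENNReal.ofReal ((k : ℝ) ^ (-(β - α * Real.log (Real.exp 1 * β / α) - 3)))
  set Egood := ⋂ i ∈ T \ A, {ω | L < N i ω}
  have hgL : ∀ j, L < j → g j = 1 := fun j hj => estimator_eq_one_of_lt hu hg hj
  have hout : ∀ᵐ ω ∂μ, ∀ i ∉ T, N i ω = 0 := by
    refine ae_all_iff.2 fun i => ?_
    by_cases hi : i ∈ T
    · exact ae_of_all _ fun _ h => absurd hi h
    · have h0 : kball i = 0 := by simpa [T] using hi
      filter_upwards [(by simpa [h0] using hN i : HasLaw (N i) (poissonMeasure 0) μ)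
        |>.ae_eq_zero_of_poissonMeasure_zero] with ω hω _ using hω
  have hgood : ∀ᵐ ω ∂μ, ω ∈ Egood → (Stilde ω - T.card) ^ 2 ≤ (∑ i ∈ A, X i ω) ^ 2 := by
    filter_upwards [hout] with ω hω hωE
    rw [hStilde, hShat, hSplug]
    exact sq_clamp_estimator_sub_card_le hAT hω (fun i hi => Set.mem_iInter₂.1 hωE i hi)
      hg0 hgL hTk
  have hbdd : ∀ ω, (Stilde ω - T.card) ^ 2 ≤ k ^ 2 := fun ω => by
    rw [hStilde, hShat, hSplug]
    exact sq_clamp_estimator_sub_le_sq (Nat.cast_nonneg _) hTk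
  have hbias : (∑ i ∈ A, ∫ ω, X i ω ∂μ) ^ 2 ≤ k ^ 2 * exp (-2 * n / k) * D ^ 2 := by
    have hmean : ∀ i ∈ A, |∫ ω, X i ω ∂μ| ≤ exp (-n / k) * D := fun i hi => by
      rw [show ∫ ω, X i ω ∂μ = _ from (hN i).integral_comp (f := fun j => g j - 1) .of_discrete]
      exact (abs_integral_estimator_sub_one_le hk hn (hpos i (hAT hi)) hu hg0 hg).trans
        (mul_le_mul_of_nonneg_left (Finset.le_ciSup₂_of_mem
          (fun m : ℕ => |(∑ j ∈ Finset.Icc 1 L, w j * ((m : ℝ) / M) ^ j) - 1|) (hmemA i hi))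
          (exp_pos _).le)
    have hD : 0 ≤ D := Real.iSup_nonneg fun m => Real.iSup_nonneg fun _ => abs_nonneg _
    calc (∑ i ∈ A, ∫ ω, X i ω ∂μ) ^ 2 ≤ (k * (exp (-n / k) * D)) ^ 2 :=
          sq_sum_le_of_abs_le (by positivity) hmean
            ((Nat.cast_le.2 (Finset.card_le_card hAT)).trans hTk)
      _ = k ^ 2 * exp (-2 * n / k) * D ^ 2 := by
        rw [mul_pow, mul_pow, ← exp_nat_mul]
        ring_nf
  have hsecond : ∀ i ∈ A,
      ∫⁻ ω, ENNReal.ofReal (X i ω ^ 2) ∂μ ≤ ENNReal.ofReal (exp (-n / k)) + V := fun i hi => by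
    rw [(hN i).lintegral_comp (f := fun j => ENNReal.ofReal ((g j - 1) ^ 2))
        Measurable.of_discrete.aemeasurable,
      lintegral_sq_estimator_sub_one_poissonMeasure _ (by simp [hu 0]) hg0 hg, add_comm]
    exact add_le_add (ENNReal.ofReal_le_ofReal (exp_neg_rate_le (hpos i (hAT hi))))
      (le_iSup₂_of_le (kball i) (hmemA i hi) le_self_add)
  have hbad : ∀ i ∈ T \ A, ENNReal.ofReal (k ^ 2) * μ {ω | N i ω ≤ L}
      ≤ ENNReal.ofReal (exp (-n / k)) + V := by
    intro i hi
    obtain ⟨hiT, hiA⟩ := Finset.mem_sdiff.1 hi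
    rw [show μ {ω | N i ω ≤ L} = poissonMeasure _ (Set.Iic L) from
      (hN i).measure_eq measurableSet_Iic]
    -- for `k = 1` we have `L = M = 0`: `V` is an empty supremum, so the miss probability
    -- `e^{-n}` of the single colour is charged to the second term
    rcases hk.eq_or_lt with hk1 | hk1
    · obtain rfl : L = 0 := by exact_mod_cast (show (L : ℝ) = 0 by rw [hL, ← hk1]; simp)
      rw [show (k : ℝ) ^ 2 = 1 by rw [← hk1]; norm_num, ENNReal.ofReal_one, one_mul,
        poissonMeasure_Iic_zero]
      exact (ENNReal.ofReal_le_ofReal (exp_neg_rate_le (hpos i hiT))).trans le_self_add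
    · have hM1 : 1 ≤ M := by
        have hlogk : 0 < Real.log k := log_pos (by exact_mod_cast hk1)
        have : (0 : ℝ) < M := by rw [hM]; have := hα.trans hαβ; positivity
        exact_mod_cast this
      have hMi : M ≤ kball i := (by simpa [A, hiT] using hiA : M < kball i).le
      exact le_add_left ((ofReal_sq_mul_poissonMeasure_Iic_le hk1 hn hα hαβ hL hM hMi).trans
        (le_iSup₂_of_le 1 (Finset.mem_Icc.2 ⟨le_rfl, hM1⟩) le_add_self))
  have hunion : μ Egoodᶜ ≤ ∑ i ∈ T \ A, μ {ω | N i ω ≤ L} := by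
    refine le_of_eq_of_le ?_ (measure_biUnion_finset_le _ _)
    simp [Egood, Set.compl_ofPred]
  have hXmeas : ∀ i, Measurable (X i) := fun i =>
    (Measurable.of_discrete (f := fun j : ℕ => g j - 1)).comp (hmeas i)
  have hXL2 : ∀ i ∈ A, MemLp (X i) 2 μ := fun i _ =>
    memLp_comp_of_eq_zero (hmeas i) (fun j hj => sub_eq_zero.2 (hgL j hj)) 2
  have hXindep : Set.Pairwise A fun i j => IndepFun (X i) (X j) μ := fun i _ j _ hij =>
    (hindep.indepFun hij).comp (Measurable.of_discrete (f := fun j : ℕ => g j - 1))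
      (Measurable.of_discrete (f := fun j : ℕ => g j - 1))
  calc ∫⁻ ω, ENNReal.ofReal ((Stilde ω - T.card) ^ 2) ∂μ
      ≤ ∫⁻ ω, ENNReal.ofReal ((∑ i ∈ A, X i ω) ^ 2) ∂μ + ENNReal.ofReal (k ^ 2) * μ Egoodᶜ :=
        lintegral_ofReal_le_add_mul_measure_compl
          (Finset.measurableSet_biInter _ fun i _ => hmeas i measurableSet_Ioi)
          ((Finset.measurable_sum A fun i _ => hXmeas i).pow_const 2) hgood hbdd
    _ ≤ ENNReal.ofReal ((∑ i ∈ A, ∫ ω, X i ω ∂μ) ^ 2)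
          + ∑ i ∈ A, ∫⁻ ω, ENNReal.ofReal (X i ω ^ 2) ∂μ
          + ∑ i ∈ T \ A, ENNReal.ofReal (k ^ 2) * μ {ω | N i ω ≤ L} := by
        rw [← Finset.mul_sum]
        gcongr
        exact lintegral_sq_sum_le_of_pairwise_indepFun hXL2 hXindep
    _ ≤ ENNReal.ofReal (k ^ 2 * exp (-2 * n / k) * D ^ 2)
          + ∑ i ∈ T, (ENNReal.ofReal (exp (-n / k)) + V) := by
        rw [← Finset.sum_sdiff hAT, add_assoc, add_comm (∑ i ∈ A, _)]
        gcongr with i hi i hi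
        exacts [hbad i hi, hsecond i hi]
    _ ≤ _ := by
        rw [Finset.sum_const, nsmul_eq_mul, add_assoc, ENNReal.ofReal_mul (Nat.cast_nonneg _),
          ENNReal.ofReal_natCast, ← mul_add]
        gcongr
        exact_mod_cast hTk
end

section
/- Let M > L ≥ 1 be integers, let B be the M × L matrix with entries B_{m,j} = (m/M)^j for m ∈ {1,…,M}, j ∈ {1,…,L}, and let 1 ∈ ℝ^M be the all-ones vector. Then min_{w ∈ ℝ^L} ‖Bw − 1‖_2 = (C(M+L+1, L+1)/C(M, L+1) − 1)^{−1/2}, where C(·,·) denotes the binomial coefficient and ‖·‖_2 the Euclidean norm. -/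
/-!
A residual `Bw − 1` is the vector of values at `m = 1, …, M` of a polynomial of degree `≤ L`
taking the value `−1` at `0`. If `P` has degree `≤ L` and its values are orthogonal to
`m ↦ m ^ j` for `1 ≤ j ≤ L`, then `−P / P(0)` is such a residual, it is orthogonal to every
difference of two residuals, and the minimal squared norm is `S / P(0)` with `S = ∑ P(m)`.

Such a `P` is given by a discrete Rodrigues formula `m P(m) = Δᴸ g(m)`, where
`g(x) = x (x − 1) ⋯ (x − L) · (M + L − x) ⋯ (M + 1 − x)`. As `g` vanishes at `1, …, L` and at
`M + 1, …, M + L`, summing by parts `L` times moves `Δᴸ` onto the other factor, which kills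
polynomials of degree `< L`. Summing by parts against `1 / m`, whose `L`-th difference is
`(−1)ᴸ L! / (m (m + 1) ⋯ (m + L))`, gives `S = (L!)² C(M, L + 1)`, while
`P(0) = (Δᴸ g')(0) = (L!)² (C(M + L + 1, L + 1) − C(M, L + 1))` by the hockey-stick identity.
-/

open Real Finset Polynomial fwdDiff
open scoped Nat

theorem fwdDiff_iter_comp_natCast {R G : Type*} [AddCommMonoidWithOne R] [AddCommGroup G]
    (f : R → G) (n m : ℕ) :
    (Δ_[1])^[n] (fun k : ℕ ↦ f k) m = (Δ_[1])^[n] f m := by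
  simp [fwdDiff_iter_eq_sum_shift, nsmul_one]

theorem fwdDiff_iter_eq_zero_of_forall {M G : Type*} [AddCommMonoid M] [AddCommGroup G]
    (h : M) (f : M → G) (n : ℕ) (y : M) (hf : ∀ k ≤ n, f (y + k • h) = 0) :
    (Δ_[h])^[n] f y = 0 := by
  rw [fwdDiff_iter_eq_sum_shift]
  exact sum_eq_zero fun k hk ↦ by rw [hf k (Nat.lt_succ_iff.1 (mem_range.1 hk)), smul_zero]

theorem sum_Ico_mul_fwdDiff_eq_neg {R : Type*} [CommRing R] (v F : ℕ → R) {a b : ℕ}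
    (hab : a ≤ b) (ha : F a = 0) (hb : F b = 0) :
    ∑ m ∈ Ico a b, v m * Δ_[1] F m = -∑ m ∈ Ico a b, Δ_[1] v m * F (m + 1) := by
  have htel := sum_Ico_sub (fun m ↦ v m * F m) hab
  simp only [ha, hb, mul_zero, sub_zero] at htel
  rw [eq_neg_iff_add_eq_zero, ← sum_add_distrib, ← htel]
  exact sum_congr rfl fun m _ ↦ by simp only [fwdDiff]; ring

theorem sum_Ico_mul_fwdDiff_iter {R : Type*} [CommRing R] (u f : ℕ → R) {a b : ℕ}
    (hab : a ≤ b) (n : ℕ) (ha : ∀ i < n, f (a + i) = 0) (hb : ∀ i < n, f (b + i) = 0) :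
    ∑ m ∈ Ico a b, u m * (Δ_[1])^[n] f m
      = (-1) ^ n * ∑ m ∈ Ico a b, (Δ_[1])^[n] u m * f (m + n) := by
  induction n generalizing f with
  | zero => simp
  | succ n ih =>
    have hΔa : ∀ i < n, Δ_[1] f (a + i) = 0 := fun i hi ↦ by
      simp only [fwdDiff, add_assoc, ha i (by omega), ha (i + 1) (by omega), sub_zero]
    have hΔb : ∀ i < n, Δ_[1] f (b + i) = 0 := fun i hi ↦ by
      simp only [fwdDiff, add_assoc, hb i (by omega), hb (i + 1) (by omega), sub_zero]
    have hparts := sum_Ico_mul_fwdDiff_eq_neg ((Δ_[1])^[n] u) (fun m ↦ f (m + n)) hab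
      (ha n n.lt_succ_self) (hb n n.lt_succ_self)
    simp only [fwdDiff_comp_add, ← Function.iterate_succ_apply' (fwdDiff 1),
      add_right_comm _ 1 n] at hparts
    rw [Function.iterate_succ_apply, ih (Δ_[1] f) hΔa hΔb, hparts, pow_succ]
    simp only [Nat.succ_eq_add_one, ← add_assoc]
    ring

theorem fwdDiff_iter_inv {K : Type*} [Field K] [LinearOrder K] [IsStrictOrderedRing K]
    (n : ℕ) {x : K} (hx : 0 < x) :
    (Δ_[1])^[n] (fun y : K ↦ y⁻¹) x = (-1) ^ n * n ! / (ascPochhammer K (n + 1)).eval x := by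
  induction n generalizing x with
  | zero => simp
  | succ n ih =>
    have hA₀ := (ascPochhammer_pos (n + 1) x hx).ne'
    have hA₁ := (ascPochhammer_pos (n + 1) (x + 1) (by positivity)).ne'
    -- both sides are the Pochhammer symbol of length `n + 2` at `x`
    have hshift : x * (ascPochhammer K (n + 1)).eval (x + 1)
        = (ascPochhammer K (n + 1)).eval x * (x + (n + 1)) := by
      have h := ascPochhammer_succ_eval (n + 1) x
      rw [ascPochhammer_succ_left K (n + 1), eval_mul, eval_X, eval_comp, eval_add, eval_X,
        eval_one] at h
      rw [h]
      push_cast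
      ring
    rw [Function.iterate_succ_apply', fwdDiff, ih (by positivity), ih hx,
      ascPochhammer_succ_eval (n + 1) x, div_sub_div _ _ hA₁ hA₀,
      div_eq_div_iff (by positivity) (by positivity)]
    push_cast [Nat.factorial_succ]
    linear_combination -(-1) ^ n * (n ! : K) * (ascPochhammer K (n + 1)).eval x * hshift

noncomputable def fwdDiffPoly {R : Type*} [CommRing R] (p : R[X]) : R[X] :=
  p.comp (X + 1) - p

section FwdDiffPoly

variable {R : Type*} [CommRing R]

theorem eval_fwdDiffPoly_iter (n : ℕ) (p : R[X]) (x : R) :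
    (fwdDiffPoly^[n] p).eval x = (Δ_[1])^[n] p.eval x := by
  induction n generalizing x with
  | zero => rfl
  | succ n ih => simp [Function.iterate_succ_apply', ← ih, fwdDiffPoly, fwdDiff, eval_comp]

theorem derivative_fwdDiffPoly_iter (n : ℕ) (p : R[X]) :
    derivative (fwdDiffPoly^[n] p) = fwdDiffPoly^[n] (derivative p) := by
  induction n with
  | zero => rfl
  | succ n ih => simp [Function.iterate_succ_apply', ← ih, fwdDiffPoly, derivative_comp]

theorem Polynomial.natDegree_lt_of_fwdDiff_iter_eval_eq_zero [IsDomain R] [CharZero R]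
    {p : R[X]} {n : ℕ} (hn : 0 < n) (h : (Δ_[1])^[n] p.eval = 0) : p.natDegree < n := by
  by_contra! hle
  have hp : p ≠ 0 := by rintro rfl; simp only [natDegree_zero, nonpos_iff_eq_zero] at hle; omega
  have hzero : (Δ_[1])^[p.natDegree] p.eval = 0 := by
    rw [← Nat.sub_add_cancel hle, Function.iterate_add_apply, h]
    exact Function.iterate_fixed (fwdDiff_const (1 : R) (0 : R)) _
  have := congr_fun (p.fwdDiff_iter_degree_eq_factorial.symm.trans hzero) 0
  simp [leadingCoeff_ne_zero.mpr hp, Nat.factorial_ne_zero] at this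

theorem natDegree_fwdDiffPoly_iter_lt [IsDomain R] [CharZero R] {p : R[X]} {n k : ℕ}
    (hk : 0 < k) (hp : p.natDegree < n + k) : (fwdDiffPoly^[n] p).natDegree < k := by
  refine natDegree_lt_of_fwdDiff_iter_eval_eq_zero hk (funext fun x ↦ ?_)
  rw [← eval_fwdDiffPoly_iter, ← Function.iterate_add_apply, eval_fwdDiffPoly_iter,
    fwdDiff_iter_eq_zero_of_degree_lt (by omega), Pi.zero_apply]

end FwdDiffPoly

theorem descPochhammer_eval_neg_one {R : Type*} [CommRing R] (j : ℕ) :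
    (descPochhammer R j).eval (-1) = (-1) ^ j * j ! := by
  have h := ascPochhammer_eval_neg_eq_descPochhammer R (-1) j
  rw [neg_neg, ascPochhammer_eval_one] at h
  rw [h, ← mul_assoc, ← pow_add, ← two_mul, pow_mul, neg_one_sq, one_pow, one_mul]

theorem eval_derivative_descPochhammer {R : Type*} [CommRing R] (k j : ℕ) :
    (derivative (descPochhammer R (k + 1 + j))).eval (k : R) = (-1) ^ j * (k ! * j !) := by
  rw [← descPochhammer_mul, descPochhammer_succ_right]
  simp [derivative_mul, eval_comp, descPochhammer_eval_eq_descFactorial,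
    descPochhammer_eval_neg_one, Nat.descFactorial_self, mul_left_comm]

theorem sum_range_choose_eq_choose_succ (N k : ℕ) :
    ∑ i ∈ range N, i.choose k = N.choose (k + 1) := by
  induction N with
  | zero => simp
  | succ N ih => rw [sum_range_succ, ih, Nat.choose_succ_succ', add_comm]

theorem sum_Icc_choose_sub (M L : ℕ) :
    ∑ m ∈ Icc 1 M, (M - m).choose L = M.choose (L + 1) := by
  rw [← Ico_add_one_right_eq_Icc, sum_Ico_reflect (fun i ↦ i.choose L) 1 le_rfl, Nat.sub_self,
    Nat.add_sub_cancel, ← range_eq_Ico, sum_range_choose_eq_choose_succ]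

theorem sum_range_choose_sub_add_choose (M L : ℕ) :
    ∑ k ∈ range (L + 1), (M + L - k).choose L + M.choose (L + 1)
      = (M + L + 1).choose (L + 1) := by
  have hreflect := sum_range_reflect (fun j ↦ (M + j).choose L) (L + 1)
  rw [sum_congr rfl fun k hk ↦ by rw [show M + L - k = M + (L + 1 - 1 - k) by
      have := mem_range.1 hk; omega], hreflect, ← sum_range_choose_eq_choose_succ M,
    ← sum_range_choose_eq_choose_succ (M + L + 1), add_comm, add_assoc]
  exact (sum_range_add (fun i ↦ i.choose L) M (L + 1)).symm

theorem choose_succ_lt_choose_add (L M : ℕ) (hLM : L ≤ M) :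
    M.choose (L + 1) < (M + L + 1).choose (L + 1) := by
  have := Nat.choose_pos hLM
  calc M.choose (L + 1) < (M + 1).choose (L + 1) := by rw [Nat.choose_succ_succ' M L]; omega
    _ ≤ (M + L + 1).choose (L + 1) := Nat.choose_le_choose _ (by omega)

theorem Polynomial.eval_eq_coeff_zero_add_sum_Icc {R : Type*} [CommSemiring R] {p : R[X]}
    {L : ℕ} (hp : p.natDegree ≤ L) (x : R) :
    p.eval x = p.coeff 0 + ∑ j ∈ Icc 1 L, p.coeff j * x ^ j := by
  rw [eval_eq_sum_range' (Nat.lt_succ_of_le hp), sum_range_succ', pow_zero, mul_one, add_comm,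
    ← Ico_add_one_right_eq_Icc, sum_Ico_eq_sum_range, Nat.add_sub_cancel]
  simp only [add_comm 1]

theorem sum_Icc_neg_coeff_mul_div_pow_sub_one {K : Type*} [Field K] {p : K[X]} {L : ℕ}
    (hp : p.natDegree ≤ L) (h0 : p.eval 0 ≠ 0) {a : K} (ha : a ≠ 0) (x : K) :
    ∑ j ∈ Icc 1 L, -(p.coeff j * a ^ j) / p.eval 0 * (x / a) ^ j - 1
      = -(p.eval 0)⁻¹ * p.eval x := by
  rw [← coeff_zero_eq_eval_zero] at h0 ⊢
  have hterm : ∀ j, -(p.coeff j * a ^ j) / p.coeff 0 * (x / a) ^ j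
      = -(p.coeff 0)⁻¹ * (p.coeff j * x ^ j) := fun j ↦ by rw [div_pow]; field_simp
  rw [sum_congr rfl fun j _ ↦ hterm j, ← mul_sum, eval_eq_coeff_zero_add_sum_Icc hp x]
  field_simp
  ring

theorem iInf_sqrt_sum_sq_eq_of_orthogonal {ι κ : Type*} (s : Finset ι) (r : κ → ι → ℝ)
    (c : ι → ℝ) {K t : ℝ} (w₀ : κ) (horth : ∀ w, ∑ i ∈ s, r w i * c i = K)
    (hw₀ : ∀ i ∈ s, r w₀ i = t * c i) :
    ⨅ w, √(∑ i ∈ s, r w i ^ 2) = √(t * K) := by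
  have hK : K = t * ∑ i ∈ s, c i ^ 2 := by
    rw [← horth w₀, mul_sum]
    exact sum_congr rfl fun i hi ↦ by rw [hw₀ i hi]; ring
  have hmin : ∑ i ∈ s, r w₀ i ^ 2 = t * K := by
    rw [hK, mul_sum, mul_sum]
    exact sum_congr rfl fun i hi ↦ by rw [hw₀ i hi]; ring
  -- Pythagoras: `∑ (r w)² = ∑ (r w - t c)² + t K`
  have hlow : ∀ w, t * K ≤ ∑ i ∈ s, r w i ^ 2 := fun w ↦ by
    have hsq := sum_nonneg fun i (_ : i ∈ s) ↦ sq_nonneg (r w i - t * c i)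
    have hexp : ∑ i ∈ s, (r w i - t * c i) ^ 2
        = ∑ i ∈ s, r w i ^ 2 - 2 * t * ∑ i ∈ s, r w i * c i + t ^ 2 * ∑ i ∈ s, c i ^ 2 := by
      simp only [mul_sum, ← sum_sub_distrib, ← sum_add_distrib]
      exact sum_congr rfl fun i _ ↦ by ring
    rw [hexp, horth w] at hsq
    have htK : t * K = t ^ 2 * ∑ i ∈ s, c i ^ 2 := by rw [hK]; ring
    linarith
  have : Nonempty κ := ⟨w₀⟩
  refine le_antisymm ((ciInf_le ⟨0, ?_⟩ w₀).trans_eq (by rw [hmin]))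
    (le_ciInf fun w ↦ Real.sqrt_le_sqrt (hlow w))
  rintro _ ⟨w, rfl⟩
  exact Real.sqrt_nonneg _

noncomputable def rodriguesGen (L M : ℕ) : ℝ[X] :=
  descPochhammer ℝ (L + 1) * (descPochhammer ℝ L).comp (C ((M + L : ℕ) : ℝ) - X)

-- Up to normalisation, the Hahn polynomial `Q_L(x - 1; 1, 0, M - 1)`, orthogonal to lower degrees
-- for the weight `m` on `{1, …, M}`.
noncomputable def hahnPoly (L M : ℕ) : ℝ[X] := (fwdDiffPoly^[L] (rodriguesGen L M)).divX

section Certificate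

variable (L M : ℕ)

theorem eval_rodriguesGen_natCast {n : ℕ} (hn : n ≤ M + L) :
    (rodriguesGen L M).eval (n : ℝ)
      = n.descFactorial (L + 1) * (M + L - n).descFactorial L := by
  rw [rodriguesGen, eval_mul, eval_comp, eval_sub, eval_C, eval_X, ← Nat.cast_sub hn,
    descPochhammer_eval_eq_descFactorial, descPochhammer_eval_eq_descFactorial]

theorem eval_rodriguesGen_eq_zero_of_le {n : ℕ} (hn : n ≤ L) :
    (rodriguesGen L M).eval (n : ℝ) = 0 := by
  rw [eval_rodriguesGen_natCast L M (by omega),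
    Nat.descFactorial_eq_zero_iff_lt.2 (show n < L + 1 by omega)]
  simp

theorem eval_rodriguesGen_eq_zero_of_lt {n : ℕ} (h₁ : M < n) (h₂ : n ≤ M + L) :
    (rodriguesGen L M).eval (n : ℝ) = 0 := by
  rw [eval_rodriguesGen_natCast L M h₂,
    Nat.descFactorial_eq_zero_iff_lt.2 (show M + L - n < L by omega)]
  simp

theorem eval_rodriguesGen_add {m : ℕ} (hm : m ≤ M) :
    (rodriguesGen L M).eval ((m + L : ℕ) : ℝ)
      = (ascPochhammer ℝ (L + 1)).eval (m : ℝ) * (M - m).descFactorial L := by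
  rw [eval_rodriguesGen_natCast L M (by omega), ascPochhammer_nat_eq_natCast_descFactorial,
    show M + L - (m + L) = M - m by omega, show m + (L + 1) - 1 = m + L by omega]

theorem natDegree_rodriguesGen_le : (rodriguesGen L M).natDegree ≤ 2 * L + 1 := by
  have hlin : (C ((M + L : ℕ) : ℝ) - X).natDegree ≤ 1 := by
    rw [sub_eq_neg_add, natDegree_add_C]
    simp
  have hcomp := natDegree_comp_le (p := descPochhammer ℝ L) (q := C ((M + L : ℕ) : ℝ) - X)
  rw [descPochhammer_natDegree] at hcomp
  refine natDegree_mul_le.trans ?_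
  rw [descPochhammer_natDegree]
  nlinarith

theorem eval_derivative_rodriguesGen {k : ℕ} (hk : k ≤ L) :
    (derivative (rodriguesGen L M)).eval (k : ℝ)
      = (-1) ^ (L - k) * (k ! * (L - k)!) * (M + L - k).descFactorial L := by
  have hD := eval_derivative_descPochhammer (R := ℝ) k (L - k)
  rw [show k + 1 + (L - k) = L + 1 by omega] at hD
  rw [rodriguesGen, derivative_mul, eval_add, eval_mul, eval_mul, hD,
    descPochhammer_eval_eq_descFactorial,
    Nat.descFactorial_eq_zero_iff_lt.2 (show k < L + 1 by omega), eval_comp, eval_sub, eval_C,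
    eval_X, ← Nat.cast_sub (by omega), descPochhammer_eval_eq_descFactorial]
  simp

theorem X_mul_hahnPoly : X * hahnPoly L M = fwdDiffPoly^[L] (rodriguesGen L M) := by
  have hU0 : (fwdDiffPoly^[L] (rodriguesGen L M)).eval 0 = 0 := by
    rw [eval_fwdDiffPoly_iter]
    exact fwdDiff_iter_eq_zero_of_forall 1 _ L 0 fun k hk ↦ by
      simpa using eval_rodriguesGen_eq_zero_of_le L M hk
  have := X_mul_divX_add (fwdDiffPoly^[L] (rodriguesGen L M))
  rwa [coeff_zero_eq_eval_zero, hU0, C_0, add_zero] at this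

theorem natDegree_hahnPoly_le : (hahnPoly L M).natDegree ≤ L := by
  have := natDegree_fwdDiffPoly_iter_lt (n := L) (k := L + 2) (by omega)
    ((natDegree_rodriguesGen_le L M).trans_lt (by omega))
  rw [hahnPoly, natDegree_divX_eq_natDegree_tsub_one]
  omega

theorem natCast_mul_eval_hahnPoly (m : ℕ) :
    (m : ℝ) * (hahnPoly L M).eval (m : ℝ)
      = (Δ_[1])^[L] (fun n : ℕ ↦ (rodriguesGen L M).eval (n : ℝ)) m := by
  rw [fwdDiff_iter_comp_natCast (fun x : ℝ ↦ (rodriguesGen L M).eval x),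
    ← eval_fwdDiffPoly_iter, ← X_mul_hahnPoly, eval_mul, eval_X]

theorem sum_mul_natCast_mul_eval_hahnPoly (u : ℕ → ℝ) :
    ∑ m ∈ Icc 1 M, u m * (m * (hahnPoly L M).eval (m : ℝ))
      = (-1) ^ L * ∑ m ∈ Icc 1 M,
          (Δ_[1])^[L] u m * (rodriguesGen L M).eval ((m + L : ℕ) : ℝ) := by
  simp_rw [natCast_mul_eval_hahnPoly, ← Ico_add_one_right_eq_Icc]
  exact sum_Ico_mul_fwdDiff_iter u _ (by omega) L
    (fun i _ ↦ eval_rodriguesGen_eq_zero_of_le L M (by omega))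
    (fun i _ ↦ eval_rodriguesGen_eq_zero_of_lt L M (by omega) (by omega))

theorem sum_pow_mul_eval_hahnPoly {j : ℕ} (hj : 1 ≤ j) (hjL : j ≤ L) :
    ∑ m ∈ Icc 1 M, (m : ℝ) ^ j * (hahnPoly L M).eval (m : ℝ) = 0 := by
  have key := sum_mul_natCast_mul_eval_hahnPoly L M (fun m ↦ (m : ℝ) ^ (j - 1))
  simp only [fwdDiff_iter_comp_natCast (fun x : ℝ ↦ x ^ (j - 1)),
    fwdDiff_iter_pow_eq_zero_of_lt (show j - 1 < L by omega), Pi.zero_apply, zero_mul,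
    sum_const_zero, mul_zero] at key
  rw [← key]
  refine sum_congr rfl fun m _ ↦ ?_
  rw [← mul_assoc, ← pow_succ, Nat.sub_add_cancel hj]

theorem sum_eval_hahnPoly :
    ∑ m ∈ Icc 1 M, (hahnPoly L M).eval (m : ℝ) = L ! * L ! * M.choose (L + 1) := by
  have key := sum_mul_natCast_mul_eval_hahnPoly L M (fun m ↦ (m : ℝ)⁻¹)
  have hlhs : ∀ m ∈ Icc 1 M, (m : ℝ)⁻¹ * (m * (hahnPoly L M).eval (m : ℝ))
      = (hahnPoly L M).eval (m : ℝ) := fun m hm ↦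
    inv_mul_cancel_left₀ (by have := (mem_Icc.1 hm).1; positivity) _
  have hrhs : ∀ m ∈ Icc 1 M, (Δ_[1])^[L] (fun m : ℕ ↦ (m : ℝ)⁻¹) m
      * (rodriguesGen L M).eval ((m + L : ℕ) : ℝ)
        = (-1) ^ L * (L ! * (L ! * (M - m).choose L)) := by
    intro m hm
    obtain ⟨h₁, h₂⟩ := mem_Icc.1 hm
    have hA := (ascPochhammer_pos (L + 1) (m : ℝ) (by positivity)).ne'
    rw [fwdDiff_iter_comp_natCast (fun x : ℝ ↦ x⁻¹), fwdDiff_iter_inv L (by positivity),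
      eval_rodriguesGen_add L M h₂, Nat.descFactorial_eq_factorial_mul_choose]
    field_simp
    push_cast
    ring
  rw [← sum_congr rfl hlhs, key, sum_congr rfl hrhs, ← mul_sum, ← mul_assoc, ← pow_add,
    ← two_mul, pow_mul, neg_one_sq, one_pow, one_mul, ← mul_sum, ← mul_sum, ← mul_assoc]
  exact_mod_cast congrArg (fun n : ℕ ↦ (L ! * L ! * n : ℝ)) (sum_Icc_choose_sub M L)

theorem eval_hahnPoly_zero :
    (hahnPoly L M).eval 0
      = L ! * L ! * ((M + L + 1).choose (L + 1) - M.choose (L + 1) : ℝ) := by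
  have hderiv : (hahnPoly L M).eval 0
      = (derivative (fwdDiffPoly^[L] (rodriguesGen L M))).eval 0 := by
    simp [← X_mul_hahnPoly, derivative_mul]
  have hterm : ∀ k ∈ range (L + 1), ((-1 : ℤ) ^ (L - k) * L.choose k) •
      (derivative (rodriguesGen L M)).eval (0 + k • (1 : ℝ))
        = L ! * (L ! * (M + L - k).choose L) := by
    intro k hk
    have hkL : k ≤ L := Nat.lt_succ_iff.1 (mem_range.1 hk)
    have hsign : (-1 : ℝ) ^ (L - k) * (-1) ^ (L - k) = 1 := by
      rw [← pow_add, ← two_mul, pow_mul, neg_one_sq, one_pow]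
    have hfac : (L.choose k : ℝ) * k ! * (L - k)! = L ! := by
      exact_mod_cast Nat.choose_mul_factorial_mul_factorial hkL
    rw [zero_add, nsmul_one, eval_derivative_rodriguesGen L M hkL, zsmul_eq_mul,
      Nat.descFactorial_eq_factorial_mul_choose]
    push_cast
    linear_combination (L.choose k * k ! * (L - k)! * L ! * (M + L - k).choose L : ℝ) * hsign
      + (L ! * (M + L - k).choose L : ℝ) * hfac
  have hsum : ∑ k ∈ range (L + 1), ((M + L - k).choose L : ℝ)
      = (M + L + 1).choose (L + 1) - M.choose (L + 1) :=
    eq_sub_of_add_eq (by exact_mod_cast sum_range_choose_sub_add_choose M L)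
  rw [hderiv, derivative_fwdDiffPoly_iter, eval_fwdDiffPoly_iter, fwdDiff_iter_eq_sum_shift,
    sum_congr rfl hterm, ← mul_sum, ← mul_sum, hsum, mul_assoc]

theorem sum_residual_mul_eval_hahnPoly (w : ℕ → ℝ) :
    ∑ m ∈ Icc 1 M, (∑ j ∈ Icc 1 L, w j * ((m : ℝ) / M) ^ j - 1) * (hahnPoly L M).eval (m : ℝ)
      = -∑ m ∈ Icc 1 M, (hahnPoly L M).eval (m : ℝ) := by
  have hcol : ∀ j ∈ Icc 1 L,
      ∑ m ∈ Icc 1 M, w j * ((m : ℝ) / M) ^ j * (hahnPoly L M).eval (m : ℝ) = 0 := by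
    intro j hj
    obtain ⟨h₁, h₂⟩ := mem_Icc.1 hj
    calc ∑ m ∈ Icc 1 M, w j * ((m : ℝ) / M) ^ j * (hahnPoly L M).eval (m : ℝ)
        = w j / (M : ℝ) ^ j * ∑ m ∈ Icc 1 M, (m : ℝ) ^ j * (hahnPoly L M).eval (m : ℝ) := by
          rw [mul_sum]
          exact sum_congr rfl fun m _ ↦ by rw [div_pow]; ring
      _ = 0 := by rw [sum_pow_mul_eval_hahnPoly L M h₁ h₂, mul_zero]
  simp only [sub_mul, one_mul, sum_sub_distrib, sum_mul]
  rw [sum_comm, sum_eq_zero hcol, zero_sub]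

end Certificate

theorem stmt12_general (L M : ℕ) (hLM : L < M) :
    (⨅ w : ℕ → ℝ, Real.sqrt (∑ m ∈ Finset.Icc 1 M,
        ((∑ j ∈ Finset.Icc 1 L, w j * ((m : ℝ) / M) ^ j) - 1) ^ 2))
      = ((Nat.choose (M + L + 1) (L + 1) : ℝ) / (Nat.choose M (L + 1) : ℝ) - 1)
          ^ (-(1 : ℝ) / 2) := by
  have hC : (0 : ℝ) < M.choose (L + 1) := by exact_mod_cast Nat.choose_pos hLM
  have hCC : (M.choose (L + 1) : ℝ) < (M + L + 1).choose (L + 1) := by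
    exact_mod_cast choose_succ_lt_choose_add L M hLM.le
  have hP0 : 0 < (hahnPoly L M).eval 0 := by
    rw [eval_hahnPoly_zero]
    exact mul_pos (by positivity) (sub_pos.2 hCC)
  rw [iInf_sqrt_sum_sq_eq_of_orthogonal (Icc 1 M)
      (fun w m ↦ ∑ j ∈ Icc 1 L, w j * ((m : ℝ) / M) ^ j - 1) (fun m ↦ (hahnPoly L M).eval (m : ℝ))
      (fun j ↦ -((hahnPoly L M).coeff j * (M : ℝ) ^ j) / (hahnPoly L M).eval 0)
      (sum_residual_mul_eval_hahnPoly L M) fun m _ ↦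
        sum_Icc_neg_coeff_mul_div_pow_sub_one (natDegree_hahnPoly_le L M) hP0.ne' (Nat.cast_ne_zero.2 (by omega)) _,
    sum_eval_hahnPoly, eval_hahnPoly_zero, show -(1 : ℝ) / 2 = -(1 / 2) by ring,
    Real.rpow_neg (by rw [sub_nonneg, one_le_div hC]; exact hCC.le), ← Real.sqrt_eq_rpow,
    ← Real.sqrt_inv]
  congr 1
  field_simp

theorem stmt12 (L M : ℕ) (hL : 1 ≤ L) (hLM : L < M) :
    (⨅ w : ℕ → ℝ, Real.sqrt (∑ m ∈ Finset.Icc 1 M,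
        ((∑ j ∈ Finset.Icc 1 L, w j * ((m : ℝ) / M) ^ j) - 1) ^ 2))
      = ((Nat.choose (M + L + 1) (L + 1) : ℝ) / (Nat.choose M (L + 1) : ℝ) - 1)
          ^ (-(1 : ℝ) / 2) :=
  stmt12_general L M hLM
end

section
/- Consider an urn with k balls, k_i of color i (k_i ∈ ℤ≥0, Σ_i k_i = k), and p_i = k_i/k. Assume Poisson sampling: N_i independent with N_i ~ Poisson(n·p_i). Let L = α·log k and M = β·k·log k / n be integers with β > α > 0. Then the probability that some color i satisfies both N_i ≤ L and k·p_i > M is at most k^{1 − β + α·log(eβ/α)}; that is, P[∃ i : N_i ≤ L and k_i > M] ≤ k^{1 − β + α·log(eβ/α)}. -/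
open MeasureTheory ProbabilityTheory Real ENNReal
open scoped NNReal Nat Finset

/-!
A colour with `k_i > M` has Poisson rate `r = n k_i / k ≥ β log k`. The Chernoff bound
`P[Po(r) ≤ L] ≤ e^(L - r) (r / L)^L`, valid for `L ≤ r`, is decreasing in `r`, and at
`r = β log k`, `L = α log k` it equals `k^(-β + α log(eβ/α))`. At most `k` colours have
`k_i ≥ 1`, so a union bound over them costs a factor `k`.
-/

noncomputable def poissonLowerTailBound (L : ℕ) (r : ℝ) : ℝ := exp (L - r) * (r / L) ^ L

/- Termwise, `r ^ j / j! ≤ (r / L) ^ L * L ^ j / j!` for `j ≤ L ≤ r`; summing the last factor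
against the exponential series gives `e ^ L`. -/
theorem sum_range_poisson_le_poissonLowerTailBound {r : ℝ} {L : ℕ} (hL : 0 < L)
    (hLr : (L : ℝ) ≤ r) :
    ∑ j ∈ Finset.range (L + 1), exp (-r) * r ^ j / j ! ≤ poissonLowerTailBound L r := by
  have hLpos : (0 : ℝ) < L := by exact_mod_cast hL
  have hrL : 1 ≤ (r : ℝ) / L := (one_le_div hLpos).2 hLr
  have hterm : ∀ j ∈ Finset.range (L + 1),
      exp (-r) * r ^ j / j ! ≤ exp (-r) * ((r / L) ^ L * (L ^ j / j !)) := by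
    intro j hj
    have hjL : j ≤ L := Nat.lt_succ_iff.1 (Finset.mem_range.1 hj)
    calc exp (-r) * r ^ j / j ! = exp (-r) * ((r / L) ^ j * (L ^ j / j !)) := by
          rw [div_pow]; field_simp
      _ ≤ exp (-r) * ((r / L) ^ L * (L ^ j / j !)) := by gcongr
  calc ∑ j ∈ Finset.range (L + 1), exp (-r) * r ^ j / j !
      ≤ ∑ j ∈ Finset.range (L + 1), exp (-r) * ((r / L) ^ L * (L ^ j / j !)) :=
        Finset.sum_le_sum hterm
    _ = exp (-r) * ((r / L) ^ L * ∑ j ∈ Finset.range (L + 1), (L : ℝ) ^ j / j !) := by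
        rw [← Finset.mul_sum, ← Finset.mul_sum]
    _ ≤ exp (-r) * ((r / L) ^ L * exp L) := by
        gcongr
        exact sum_le_exp_of_nonneg hLpos.le _
    _ = poissonLowerTailBound L r := by
        rw [poissonLowerTailBound, exp_sub, exp_neg]; field_simp

theorem poissonMeasure_Iic_le_poissonLowerTailBound {r : ℝ≥0} {L : ℕ} (hL : 0 < L)
    (hLr : (L : ℝ) ≤ r) :
    poissonMeasure r (Set.Iic L) ≤ ENNReal.ofReal (poissonLowerTailBound L r) := by
  have hIic : Set.Iic L = ↑(Finset.range (L + 1)) := by ext; simp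
  rw [hIic, ← sum_measure_singleton]
  simp_rw [poissonMeasure_singleton]
  rw [← ENNReal.ofReal_sum_of_nonneg fun j _ => by positivity]
  exact ENNReal.ofReal_le_ofReal (sum_range_poisson_le_poissonLowerTailBound hL hLr)

/- From `1 + t ≤ e ^ t` with `t = b / a - 1`, and `L ≤ a`. -/
theorem div_pow_le_exp_sub {L : ℕ} {a b : ℝ} (ha : 0 < a) (hLa : (L : ℝ) ≤ a) (hab : a ≤ b) :
    (b / a) ^ L ≤ exp (b - a) := by
  have ht : 0 ≤ b / a - 1 := by rw [sub_nonneg, one_le_div ha]; exact hab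
  calc (b / a) ^ L = (b / a - 1 + 1) ^ L := by ring
    _ ≤ exp (b / a - 1) ^ L := by gcongr; exact add_one_le_exp _
    _ = exp (L * (b / a - 1)) := (exp_nat_mul _ L).symm
    _ ≤ exp (a * (b / a - 1)) := by gcongr
    _ = exp (b - a) := by congr 1; field_simp

theorem poissonLowerTailBound_antitoneOn {L : ℕ} (hL : 0 < L) :
    AntitoneOn (poissonLowerTailBound L) (Set.Ici L) := by
  intro a (hLa : (L : ℝ) ≤ a) b _ hab
  have ha : 0 < a := lt_of_lt_of_le (by exact_mod_cast hL) hLa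
  calc poissonLowerTailBound L b = exp (L - b) * ((b / a) ^ L * (a / L) ^ L) := by
        rw [poissonLowerTailBound, ← mul_pow, div_mul_div_cancel₀ ha.ne']
    _ ≤ exp (L - b) * (exp (b - a) * (a / L) ^ L) := by
        gcongr
        exact div_pow_le_exp_sub ha hLa hab
    _ = poissonLowerTailBound L a := by
        rw [poissonLowerTailBound, ← mul_assoc, ← exp_add]; ring_nf

theorem poissonLowerTailBound_mul_log {L : ℕ} {α β x : ℝ} (hα : 0 < α) (hβ : 0 < β)
    (hx : 0 < x) (hL : 0 < L) (hLx : (L : ℝ) = α * log x) :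
    poissonLowerTailBound L (β * log x) = x ^ (-β + α * log (exp 1 * β / α)) := by
  have hlogx : log x ≠ 0 := by
    rintro h
    rw [h, mul_zero] at hLx
    exact hL.ne' (by exact_mod_cast hLx)
  have hratio : β * log x / L = β / α := by rw [hLx]; field_simp
  rw [poissonLowerTailBound, hratio, ← exp_log (by positivity : 0 < β / α), ← exp_nat_mul,
    ← exp_add, rpow_def_of_pos hx, mul_div_assoc, log_mul (exp_ne_zero 1) (by positivity),
    log_exp, hLx]
  ring_nf

theorem finite_support_of_hasSum_natCast {ι : Type*} {f : ι → ℕ} {s : ℝ}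
    (h : HasSum (fun i => (f i : ℝ)) s) : (Function.support f).Finite := by
  have hsmall : ∀ᶠ i in Filter.cofinite, (f i : ℝ) < 1 :=
    h.summable.tendsto_cofinite_zero.eventually_lt_const one_pos
  refine Filter.eventually_cofinite.mp (hsmall.mono fun i hi => ?_)
  simpa [Function.mem_support] using (by exact_mod_cast hi : f i < 1)

theorem card_le_of_hasSum_natCast {ι : Type*} {f : ι → ℕ} {s : ℝ}
    (h : HasSum (fun i => (f i : ℝ)) s) (t : Finset ι) (ht : ∀ i ∈ t, f i ≠ 0) :
    (#t : ℝ) ≤ s :=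
  calc (#t : ℝ) = ∑ _i ∈ t, (1 : ℝ) := by simp
    _ ≤ ∑ i ∈ t, (f i : ℝ) := Finset.sum_le_sum fun i hi => by
        exact_mod_cast Nat.one_le_iff_ne_zero.2 (ht i hi)
    _ ≤ s := sum_le_hasSum t (fun i _ => by positivity) h

theorem measure_setOf_le_le_of_map_eq_poissonMeasure {Ω : Type*} [MeasurableSpace Ω]
    {μ : Measure Ω} {X : Ω → ℕ} (hX : Measurable X) {r : ℝ≥0}
    (hlaw : μ.map X = poissonMeasure r)
    {L : ℕ} {a : ℝ} (hL : 0 < L) (hLa : (L : ℝ) ≤ a) (har : a ≤ r) :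
    μ {ω | X ω ≤ L} ≤ ENNReal.ofReal (poissonLowerTailBound L a) := by
  rw [show {ω | X ω ≤ L} = X ⁻¹' Set.Iic L from rfl, ← Measure.map_apply hX measurableSet_Iic,
    hlaw]
  calc poissonMeasure r (Set.Iic L) ≤ ENNReal.ofReal (poissonLowerTailBound L r) :=
        poissonMeasure_Iic_le_poissonLowerTailBound hL (hLa.trans har)
    _ ≤ ENNReal.ofReal (poissonLowerTailBound L a) :=
        ENNReal.ofReal_le_ofReal <|
          poissonLowerTailBound_antitoneOn hL hLa (Set.mem_Ici.2 (hLa.trans har)) har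

theorem measure_setOf_le_le_rpow_of_map_eq_poissonMeasure {Ω : Type*} [MeasurableSpace Ω]
    {μ : Measure Ω} {X : Ω → ℕ} (hX : Measurable X) {r : ℝ≥0}
    (hlaw : μ.map X = poissonMeasure r)
    {L : ℕ} {α β x : ℝ} (hα : 0 < α) (hαβ : α < β) (hx : 1 < x) (hLx : (L : ℝ) = α * log x)
    (hr : β * log x ≤ r) :
    μ {ω | X ω ≤ L} ≤ ENNReal.ofReal (x ^ (-β + α * log (exp 1 * β / α))) := by
  have hlogx : 0 < log x := log_pos hx
  have hL : 0 < L := by exact_mod_cast (hLx ▸ mul_pos hα hlogx : (0 : ℝ) < L)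
  rw [← poissonLowerTailBound_mul_log hα (hα.trans hαβ) (by linarith) hL hLx]
  refine measure_setOf_le_le_of_map_eq_poissonMeasure hX hlaw hL ?_ hr
  rw [hLx]
  gcongr

theorem stmt19_general (k n : ℕ) (hk : 1 ≤ k) (hn : 1 ≤ n)
    (kball : ℕ → ℕ) (hsum : HasSum (fun i => (kball i : ℝ)) k)
    (L M : ℕ) (α β : ℝ) (hα : 0 < α) (hαβ : α < β)
    (hL : (L : ℝ) = α * Real.log k) (hM : (M : ℝ) = β * k * Real.log k / n)
    {Ω : Type*} [MeasurableSpace Ω] (μ : Measure Ω) [IsProbabilityMeasure μ]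
    (N : ℕ → Ω → ℕ) (hmeas : ∀ i, Measurable (N i))
    (hlaw : ∀ i, μ.map (N i) = poissonMeasure (Real.toNNReal ((n : ℝ) * kball i / k))) :
    μ {ω | ∃ i, N i ω ≤ L ∧ M < kball i}
      ≤ ENNReal.ofReal ((k : ℝ) ^ (1 - β + α * Real.log (Real.exp 1 * β / α))) := by
  obtain rfl | hk1 := eq_or_lt_of_le hk
  · simpa using prob_le_one
  have hk0 : (0 : ℝ) < k := by positivity
  set C := (k : ℝ) ^ (-β + α * Real.log (Real.exp 1 * β / α))
  set heavy := ((finite_support_of_hasSum_natCast hsum).subset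
    fun i (hi : M < kball i) => Nat.ne_zero_of_lt hi).toFinset
  have hmem : ∀ i, i ∈ heavy ↔ M < kball i := fun i => Set.Finite.mem_toFinset _
  have hheavy : ∀ i ∈ heavy, μ {ω | N i ω ≤ L} ≤ ENNReal.ofReal C := by
    intro i hi
    have hMi : (M : ℝ) ≤ kball i := by exact_mod_cast ((hmem i).1 hi).le
    have hrate : β * Real.log k ≤ n * kball i / k :=
      calc β * Real.log k = n * M / k := by rw [hM]; field_simp
        _ ≤ n * kball i / k := by gcongr
    exact measure_setOf_le_le_rpow_of_map_eq_poissonMeasure (hmeas i) (hlaw i) hα hαβ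
      (by exact_mod_cast hk1) hL (hrate.trans (le_coe_toNNReal _))
  have hcard : (#heavy : ℝ) ≤ k :=
    card_le_of_hasSum_natCast hsum heavy fun i hi => Nat.ne_zero_of_lt ((hmem i).1 hi)
  calc μ {ω | ∃ i, N i ω ≤ L ∧ M < kball i} ≤ μ (⋃ i ∈ heavy, {ω | N i ω ≤ L}) :=
        measure_mono fun ω ⟨i, hNi, hMi⟩ => Set.mem_biUnion ((hmem i).2 hMi) hNi
    _ ≤ ∑ i ∈ heavy, μ {ω | N i ω ≤ L} := measure_biUnion_finset_le _ _
    _ ≤ #heavy * ENNReal.ofReal C := by simpa using Finset.sum_le_card_nsmul _ _ _ hheavy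
    _ ≤ ENNReal.ofReal (k * C) := by
        rw [ENNReal.ofReal_mul hk0.le, ENNReal.ofReal_natCast]
        gcongr
        exact_mod_cast hcard
    _ = ENNReal.ofReal ((k : ℝ) ^ (1 - β + α * Real.log (Real.exp 1 * β / α))) := by
        rw [sub_eq_add_neg, add_assoc, Real.rpow_add hk0, Real.rpow_one]

theorem stmt19 (k n : ℕ) (hk : 1 ≤ k) (hn : 1 ≤ n)
    (kball : ℕ → ℕ) (hsum : HasSum (fun i => (kball i : ℝ)) k)
    (L M : ℕ) (α β : ℝ) (hα : 0 < α) (hαβ : α < β)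
    (hL : (L : ℝ) = α * Real.log k) (hM : (M : ℝ) = β * k * Real.log k / n)
    {Ω : Type*} [MeasurableSpace Ω] (μ : Measure Ω) [IsProbabilityMeasure μ]
    (N : ℕ → Ω → ℕ) (hmeas : ∀ i, Measurable (N i))
    (hindep : iIndepFun N μ)
    (hlaw : ∀ i, μ.map (N i) = poissonMeasure (Real.toNNReal ((n : ℝ) * kball i / k))) :
    μ {ω | ∃ i, N i ω ≤ L ∧ M < kball i}
      ≤ ENNReal.ofReal ((k : ℝ) ^ (1 - β + α * Real.log (Real.exp 1 * β / α))) :=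
  stmt19_general k n hk hn kball hsum L M α β hα hαβ hL hM μ N hmeas hlaw
end
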